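/- arXiv:2507.18629 — 7 statements merged into one kernel-verified Lean document; each statement's English description precedes it below -/
import Mathlib

section
/- Let U ⊆ 2^[N] be an r-spread family, A ⊆ U a nonempty subfamily, and 0 < r' < r. Then there exists a set S ⊆ [N] such that the family A(S) = {F \ S : F ∈ A, S ⊆ F} is r'-spread, and |S| ≤ (log|U| − log|A|)/(log r − log r'). -/
/-- A family `𝒜 ⊆ 2^[N]` is `r`-spread if for every `S`, the number of members of `𝒜`
containing `S` is at most `r ^ (-|S|) * |𝒜|`. -/
def IsSpread {N : ℕ} (r : ℝ) (𝒜 : Finset (Finset (Fin N))) : Prop :=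
  ∀ S : Finset (Fin N),
    ((𝒜.filter (fun F => S ⊆ F)).card : ℝ) ≤ r ^ (-(S.card : ℤ)) * 𝒜.card

/-- `𝒜(S) = {F \ S : F ∈ 𝒜, S ⊆ F}`. -/
def famRes {N : ℕ} (𝒜 : Finset (Finset (Fin N))) (S : Finset (Fin N)) :
    Finset (Finset (Fin N)) :=
  (𝒜.filter (fun F => S ⊆ F)).image (fun F => F \ S)

/-!
Choose `S` maximising the weight `|{F ∈ 𝒜 : S ⊆ F}| · r'^|S|`. For `T` disjoint from `S`, the
members of `𝒜(S)` containing `T` correspond to the members of `𝒜` containing `S ∪ T`, so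
maximality at `S ∪ T` is exactly the `r'`-spread condition for `𝒜(S)` at `T`. Comparing the
weight of `S` with that of `∅`, and bounding `|{F ∈ 𝒜 : S ⊆ F}|` by the `r`-spreadness of `𝒰`,
gives `|𝒜| · r^|S| ≤ |𝒰| · r'^|S|`, which is the bound on `|S|` after taking logarithms.
-/

open Finset Real

variable {N : ℕ}

theorem isSpread_iff_card_filter_mul_pow_le {r : ℝ} (hr : 0 < r) (𝒜 : Finset (Finset (Fin N))) :
    IsSpread r 𝒜 ↔ ∀ S : Finset (Fin N), (#(𝒜.filter (S ⊆ ·)) : ℝ) * r ^ #S ≤ #𝒜 :=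
  forall_congr' fun S => by rw [zpow_neg, zpow_natCast, inv_mul_eq_div, le_div_iff₀ (pow_pos hr _)]

theorem card_famRes (𝒜 : Finset (Finset (Fin N))) (S : Finset (Fin N)) :
    #(famRes 𝒜 S) = #(𝒜.filter (S ⊆ ·)) :=
  card_image_of_injOn fun F hF G hG h => by
    simp only [coe_filter, Set.mem_ofPred_eq] at hF hG
    rw [← sdiff_union_of_subset hF.2, ← sdiff_union_of_subset hG.2]
    exact congrArg (· ∪ S) h

theorem filter_famRes_of_disjoint (𝒜 : Finset (Finset (Fin N))) {S T : Finset (Fin N)}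
    (hST : Disjoint S T) :
    (famRes 𝒜 S).filter (T ⊆ ·) = famRes (𝒜.filter (T ⊆ ·)) S := by
  rw [famRes, famRes, filter_image, filter_filter, filter_filter]
  congr 1
  ext F
  simp only [mem_filter, subset_sdiff, hST.symm, and_true]
  tauto

theorem filter_famRes_eq_empty_of_not_disjoint (𝒜 : Finset (Finset (Fin N)))
    {S T : Finset (Fin N)} (hST : ¬Disjoint S T) :
    (famRes 𝒜 S).filter (T ⊆ ·) = ∅ := by
  refine filter_eq_empty_iff.2 fun G hG hTG => hST ?_
  obtain ⟨F, -, rfl⟩ := mem_image.1 hG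
  exact (sdiff_disjoint.mono_left hTG).symm

theorem isSpread_famRes_of_forall_le {r : ℝ} (hr : 0 < r) {𝒜 : Finset (Finset (Fin N))}
    {S : Finset (Fin N)}
    (hS : ∀ T, (#(𝒜.filter (T ⊆ ·)) : ℝ) * r ^ #T ≤ #(𝒜.filter (S ⊆ ·)) * r ^ #S) :
    IsSpread r (famRes 𝒜 S) := by
  rw [isSpread_iff_card_filter_mul_pow_le hr, card_famRes]
  intro T
  by_cases hST : Disjoint S T
  · have hST' := hS (T ∪ S)
    rw [card_union_of_disjoint hST.symm, pow_add, ← mul_assoc] at hST'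
    rw [filter_famRes_of_disjoint 𝒜 hST, card_famRes, filter_filter]
    simp only [← union_subset_iff] at hST' ⊢
    exact le_of_mul_le_mul_right hST' (pow_pos hr _)
  · rw [filter_famRes_eq_empty_of_not_disjoint 𝒜 hST, card_empty, Nat.cast_zero, zero_mul]
    positivity

theorem le_log_sub_div_of_mul_pow_le {a b r r' : ℝ} {n : ℕ} (ha : 0 < a) (hr' : 0 < r')
    (hrr' : r' < r) (h : a * r ^ n ≤ b * r' ^ n) :
    (n : ℝ) ≤ (log b - log a) / (log r - log r') := by
  have hr : 0 < r := hr'.trans hrr'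
  have hb : 0 < b := pos_of_mul_pos_left ((by positivity : 0 < a * r ^ n).trans_le h) (by positivity)
  have hlog := log_le_log (by positivity) h
  rw [log_mul ha.ne' (by positivity), log_mul hb.ne' (by positivity), log_pow, log_pow] at hlog
  rw [le_div_iff₀ (sub_pos.2 (log_lt_log hr' hrr'))]
  linarith

theorem finding_spread_family {N : ℕ} (r r' : ℝ) (hr' : 0 < r') (hrr' : r' < r)
    (𝒰 𝒜 : Finset (Finset (Fin N))) (h𝒰 : IsSpread r 𝒰) (h𝒜𝒰 : 𝒜 ⊆ 𝒰)
    (h𝒜 : 𝒜.Nonempty) :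
    ∃ S : Finset (Fin N), IsSpread r' (famRes 𝒜 S) ∧
      (S.card : ℝ) ≤ (Real.log 𝒰.card - Real.log 𝒜.card) / (Real.log r - Real.log r') := by
  obtain ⟨S, -, hS⟩ := exists_max_image univ
    (fun S => (#(𝒜.filter (S ⊆ ·)) : ℝ) * r' ^ #S) univ_nonempty
  have hr : 0 < r := hr'.trans hrr'
  refine ⟨S, isSpread_famRes_of_forall_le hr' fun T => hS T (mem_univ T), ?_⟩
  have h𝒜S : (#𝒜 : ℝ) ≤ #(𝒜.filter (S ⊆ ·)) * r' ^ #S := by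
    simpa using hS ∅ (mem_univ _)
  have hS𝒰 : (#(𝒜.filter (S ⊆ ·)) : ℝ) * r ^ #S ≤ #𝒰 :=
    le_trans (by gcongr) ((isSpread_iff_card_filter_mul_pow_le hr 𝒰).1 h𝒰 S)
  refine le_log_sub_div_of_mul_pow_le (Nat.cast_pos.2 (card_pos.2 h𝒜)) hr' hrr' ?_
  calc (#𝒜 : ℝ) * r ^ #S ≤ #(𝒜.filter (S ⊆ ·)) * r' ^ #S * r ^ #S := by gcongr
    _ = #(𝒜.filter (S ⊆ ·)) * r ^ #S * r' ^ #S := mul_right_comm ..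
    _ ≤ #𝒰 * r' ^ #S := by gcongr
end

section
/- Let F be a spanning forest of the complete graph K_n whose connected components have sizes q_1, q_2, ..., q_r (so q_1 + ... + q_r = n). Then the number of spanning trees of K_n containing F equals q_1·q_2·...·q_r · n^{n−2−∑_{i=1}^r (q_i−1)} = q_1·q_2·...·q_r · n^{r−2}. -/
/-!
Write `t(F)` for the number of spanning trees containing the forest `F`, which has `r`
components, and `q(x)` for the size of the component of `x`. Induct on `r`; a tree is the only
tree containing itself. For `r ≥ 2`, count the pairs `(T, (x, y))` where `T ⊇ F` is a spanning
tree and `xy` is an edge of `T` not in `F`. Every such `T` has exactly `r - 1` edges outside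
`F`, so there are `2 (r - 1) t(F)` pairs. On the other hand, `x` and `y` lie in different
components of `F`, and the trees paired with `(x, y)` are those containing `F + xy`, a forest
with `r - 1` components in which the components of `x` and `y` are merged. By induction their
number is `q₁ ⋯ q_r (1/q(x) + 1/q(y)) n^(r-3)`, and `1/q(x) + 1/q(y)` sums to `2 (r - 1) n`
over the ordered pairs, since `∑_y 1/q(y) = r` and `∑_{y ~ x} 1/q(y) = 1`.
-/

open Finset

namespace SimpleGraph

variable {V : Type*} {G : SimpleGraph V} {u v x y : V}

theorem reachable_sup_edge_iff :
    (G ⊔ edge u v).Reachable x y ↔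
      G.Reachable x y ∨ G.Reachable x u ∧ G.Reachable v y ∨
        G.Reachable x v ∧ G.Reachable u y := by
  constructor
  · rintro ⟨w⟩
    induction w with
    | nil => exact .inl .rfl
    | cons h _ ih =>
      rcases (sup_adj ..).1 h with hG | he
      · have := hG.reachable
        grind [Reachable.trans]
      · rw [edge_adj] at he
        rcases he.1 with ⟨rfl, rfl⟩ | ⟨rfl, rfl⟩ <;> grind [Reachable.refl]
  · have huv : (G ⊔ edge u v).Reachable u v := by
      rcases eq_or_ne u v with rfl | h
      · exact .rfl
      · exact Adj.reachable (.inr ((edge_adj ..).2 ⟨.inl ⟨rfl, rfl⟩, h⟩))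
    have hle := fun {a b} (h : G.Reachable a b) => h.mono (le_sup_left : G ≤ G ⊔ edge u v)
    rintro (h | ⟨h₁, h₂⟩ | ⟨h₁, h₂⟩)
    · exact hle h
    · exact (hle h₁).trans (huv.trans (hle h₂))
    · exact (hle h₁).trans (huv.symm.trans (hle h₂))

namespace ConnectedComponent

theorem map_sup_edge_eq_iff {c d : G.ConnectedComponent} :
    c.map (Hom.ofLE le_sup_left) = d.map (Hom.ofLE (le_sup_left : G ≤ G ⊔ edge u v)) ↔
      c = d ∨ c = G.connectedComponentMk u ∧ d = G.connectedComponentMk v ∨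
        c = G.connectedComponentMk v ∧ d = G.connectedComponentMk u := by
  induction c using ConnectedComponent.ind with | h x => ?_
  induction d using ConnectedComponent.ind with | h y => ?_
  simp only [map_mk, Hom.ofLE_apply, ConnectedComponent.eq, reachable_sup_edge_iff,
    reachable_comm (u := y)]

theorem supp_map_sup_edge_of_ne {c : G.ConnectedComponent}
    (hu : c ≠ G.connectedComponentMk u) (hv : c ≠ G.connectedComponentMk v) :
    (c.map (Hom.ofLE (le_sup_left : G ≤ G ⊔ edge u v))).supp = c.supp := by
  ext x
  rw [mem_supp_iff, mem_supp_iff]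
  change (G.connectedComponentMk x).map (Hom.ofLE le_sup_left) = _ ↔ _
  grind [map_sup_edge_eq_iff]

theorem bijOn_map_sup_edge (h : ¬G.Reachable u v) :
    Set.BijOn (map (Hom.ofLE (le_sup_left : G ≤ G ⊔ edge u v)))
      {G.connectedComponentMk v}ᶜ Set.univ := by
  have huv : G.connectedComponentMk u ≠ G.connectedComponentMk v := by
    rwa [Ne, ConnectedComponent.eq]
  refine ⟨Set.mapsTo_univ _ _, fun c hc d hd hcd => ?_, fun c' _ => ?_⟩
  · grind [map_sup_edge_eq_iff]
  · obtain ⟨c, rfl⟩ := surjective_map_ofLE le_sup_left c'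
    by_cases hc : c = G.connectedComponentMk v
    · exact ⟨G.connectedComponentMk u, huv, map_sup_edge_eq_iff.2 (by grind)⟩
    · exact ⟨c, hc, rfl⟩

end ConnectedComponent

theorem supp_connectedComponentMk_sup_edge :
    ((G ⊔ edge u v).connectedComponentMk u).supp =
      (G.connectedComponentMk u).supp ∪ (G.connectedComponentMk v).supp := by
  ext x
  simp only [Set.mem_union, ConnectedComponent.mem_supp_iff, ConnectedComponent.eq,
    reachable_sup_edge_iff]
  grind [Reachable.refl, Reachable.symm]

section Finite

variable [Finite V]

theorem ConnectedComponent.card_supp_pos (c : G.ConnectedComponent) : 0 < Nat.card c.supp :=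
  have := c.nonempty_supp.to_subtype
  Nat.card_pos

theorem card_connectedComponent_sup_edge (h : ¬G.Reachable u v) :
    Nat.card (G ⊔ edge u v).ConnectedComponent + 1 = Nat.card G.ConnectedComponent := by
  rw [← Nat.card_univ, ← Nat.card_congr (ConnectedComponent.bijOn_map_sup_edge h).equiv,
    Nat.card_coe_set_eq, ← Set.ncard_singleton (G.connectedComponentMk v), add_comm,
    Set.ncard_add_ncard_compl]

theorem finprod_card_supp_sup_edge (h : ¬G.Reachable u v) :
    (∏ᶠ c : (G ⊔ edge u v).ConnectedComponent, Nat.card c.supp) *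
        (Nat.card (G.connectedComponentMk u).supp * Nat.card (G.connectedComponentMk v).supp) =
      (∏ᶠ c : G.ConnectedComponent, Nat.card c.supp) *
        (Nat.card (G.connectedComponentMk u).supp + Nat.card (G.connectedComponentMk v).supp) := by
  classical
  have := Fintype.ofFinite G.ConnectedComponent
  have := Fintype.ofFinite (G ⊔ edge u v).ConnectedComponent
  set cu := G.connectedComponentMk u
  set cv := G.connectedComponentMk v
  have huv : cu ≠ cv := by rwa [Ne, ConnectedComponent.eq]
  have hcu : cu ∈ univ.erase cv := mem_erase.2 ⟨huv, mem_univ _⟩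
  have hbij := ConnectedComponent.bijOn_map_sup_edge h
  rw [← coe_singleton, ← coe_compl, compl_eq_univ_sdiff, sdiff_singleton_eq_erase] at hbij
  have hreindex : ∏ c ∈ univ.erase cv, Nat.card (c.map (Hom.ofLE le_sup_left)).supp =
      ∏ c' : (G ⊔ edge u v).ConnectedComponent, Nat.card c'.supp :=
    prod_nbij _ (fun _ _ => mem_univ _) hbij.injOn (by simpa using hbij.surjOn)
      fun _ _ => rfl
  have hcard_cu : Nat.card (cu.map (Hom.ofLE (le_sup_left : G ≤ G ⊔ edge u v))).supp =
      Nat.card cu.supp + Nat.card cv.supp := by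
    rw [ConnectedComponent.map_mk, Hom.ofLE_apply, supp_connectedComponentMk_sup_edge,
      Nat.card_coe_set_eq, Set.ncard_union_eq (G.pairwise_disjoint_supp_connectedComponent huv)]
    simp
  have hrest : ∏ c ∈ (univ.erase cv).erase cu, Nat.card (c.map (Hom.ofLE le_sup_left)).supp =
      ∏ c ∈ (univ.erase cv).erase cu, Nat.card c.supp :=
    prod_congr rfl fun c hc => by
      rw [ConnectedComponent.supp_map_sup_edge_of_ne (ne_of_mem_erase hc)
        (ne_of_mem_erase (mem_of_mem_erase hc))]
  rw [finprod_eq_prod_of_fintype, finprod_eq_prod_of_fintype, ← hreindex,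
    ← mul_prod_erase _ _ hcu, ← mul_prod_erase univ _ (mem_univ cv), ← mul_prod_erase _ _ hcu,
    hcard_cu, hrest]
  ring

theorem finprod_card_supp_sup_edge_eq_mul_inv {K : Type*} [Field K] [CharZero K]
    (h : ¬G.Reachable u v) :
    ((∏ᶠ c : (G ⊔ edge u v).ConnectedComponent, Nat.card c.supp : ℕ) : K) =
      (∏ᶠ c : G.ConnectedComponent, Nat.card c.supp : ℕ) *
        ((Nat.card (G.connectedComponentMk u).supp : K)⁻¹ +
          (Nat.card (G.connectedComponentMk v).supp : K)⁻¹) := by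
  have hu : (Nat.card (G.connectedComponentMk u).supp : K) ≠ 0 :=
    Nat.cast_ne_zero.2 (ConnectedComponent.card_supp_pos _).ne'
  have hv : (Nat.card (G.connectedComponentMk v).supp : K) ≠ 0 :=
    Nat.cast_ne_zero.2 (ConnectedComponent.card_supp_pos _).ne'
  have hprod := congrArg (Nat.cast : ℕ → K) (finprod_card_supp_sup_edge h)
  simp only [Nat.cast_mul, Nat.cast_add] at hprod
  field_simp
  linear_combination hprod

end Finite

theorem connected_iff_card_connectedComponent_eq_one :
    G.Connected ↔ Nat.card G.ConnectedComponent = 1 := by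
  rw [Nat.card_eq_one_iff_unique, connected_iff]
  constructor
  · rintro ⟨hG, ⟨x⟩⟩
    exact ⟨hG.subsingleton_connectedComponent, ⟨G.connectedComponentMk x⟩⟩
  · rintro ⟨hsub, ⟨c⟩⟩
    refine ⟨fun x y => ConnectedComponent.eq.1 (Subsingleton.elim _ _), ?_⟩
    induction c using ConnectedComponent.ind with | h x => exact ⟨x⟩

theorem exists_not_reachable_of_one_lt_card_connectedComponent [Finite V]
    (h : 1 < Nat.card G.ConnectedComponent) : ∃ u v, ¬G.Reachable u v := by
  obtain ⟨c, d, hcd⟩ := (Finite.one_lt_card_iff_nontrivial.1 h).exists_pair_ne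
  induction c using ConnectedComponent.ind with | h u => ?_
  induction d using ConnectedComponent.ind with | h v => ?_
  exact ⟨u, v, fun huv => hcd (ConnectedComponent.sound huv)⟩

theorem card_edgeSet_sup_edge [Finite V] (hn : ¬G.Adj u v) (huv : u ≠ v) :
    Nat.card (G ⊔ edge u v).edgeSet = Nat.card G.edgeSet + 1 := by
  rw [Nat.card_coe_set_eq, Nat.card_coe_set_eq, edgeSet_sup, edgeSet_edge_of_ne huv,
    Set.union_singleton, Set.ncard_insert_of_notMem (by simpa using hn)]

theorem IsAcyclic.induction_on_sup_edge [Finite V] [Nonempty V] {P : SimpleGraph V → Prop}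
    (tree : ∀ T : SimpleGraph V, T.IsTree → P T)
    (sup_edge : ∀ F : SimpleGraph V, F.IsAcyclic → 1 < Nat.card F.ConnectedComponent →
      (∀ u v, ¬F.Reachable u v → P (F ⊔ edge u v)) → P F)
    {F : SimpleGraph V} (hF : F.IsAcyclic) : P F := by
  induction hk : Nat.card F.ConnectedComponent using Nat.strong_induction_on generalizing F with
  | _ k ih =>
  rcases (show 1 ≤ k from hk ▸ Nat.card_pos).eq_or_lt with rfl | hk
  · exact tree F ⟨connected_iff_card_connectedComponent_eq_one.2 ‹_›, hF⟩
  · refine sup_edge F hF (by omega) fun u v h => ih _ ?_ (hF.sup_edge_of_not_reachable h) rfl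
    have := card_connectedComponent_sup_edge h
    omega

theorem IsAcyclic.card_edgeSet_add_card_connectedComponent [Finite V] (hG : G.IsAcyclic) :
    Nat.card G.edgeSet + Nat.card G.ConnectedComponent = Nat.card V := by
  cases isEmpty_or_nonempty V
  · simp
  refine hG.induction_on_sup_edge (P := fun G =>
    Nat.card G.edgeSet + Nat.card G.ConnectedComponent = Nat.card V)
    (fun T hT => ?_) fun F _ hF ih => ?_
  · rw [← (isTree_iff_connected_and_card.1 hT).2,
      connected_iff_card_connectedComponent_eq_one.1 hT.connected]
  · obtain ⟨u, v, h⟩ := exists_not_reachable_of_one_lt_card_connectedComponent hF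
    have := card_connectedComponent_sup_edge h
    have := ih u v h
    rw [card_edgeSet_sup_edge (fun hadj => h hadj.reachable) (by rintro rfl; exact h .rfl)] at this
    omega

def spanningTreesContaining (F : SimpleGraph V) : Set (SimpleGraph V) :=
  {T | F ≤ T ∧ T.Connected ∧ T.IsAcyclic}

variable {F T : SimpleGraph V}

theorem IsTree.spanningTreesContaining_eq (hF : F.IsTree) :
    spanningTreesContaining F = {F} := by
  refine Set.eq_singleton_iff_unique_mem.2 ⟨⟨le_rfl, hF.connected, hF.isAcyclic⟩, ?_⟩
  rintro T ⟨hle, -, hT⟩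
  exact le_antisymm ((isTree_iff_maximal_isAcyclic.1 hF).2.2 hT hle) hle

theorem Connected.finprod_card_supp (hG : G.Connected) :
    ∏ᶠ c : G.ConnectedComponent, Nat.card c.supp = Nat.card V := by
  have := hG.preconnected.subsingleton_connectedComponent
  obtain ⟨x⟩ := hG.nonempty
  have hsupp : (G.connectedComponentMk x).supp = Set.univ :=
    Set.eq_univ_of_forall fun y => Subsingleton.elim _ _
  rw [finprod_eq_single _ (G.connectedComponentMk x) fun c hc => absurd (Subsingleton.elim _ _) hc,
    hsupp, Nat.card_univ]

theorem card_edgeSet_sdiff_add_one [Finite V] (hT : T ∈ spanningTreesContaining F) :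
    Nat.card (T \ F).edgeSet + 1 = Nat.card F.ConnectedComponent := by
  obtain ⟨hle, hc, ha⟩ := hT
  have hT := (isTree_iff_connected_and_card.1 ⟨hc, ha⟩).2
  have hF := (ha.anti hle).card_edgeSet_add_card_connectedComponent
  have hsub : F.edgeSet.ncard ≤ T.edgeSet.ncard := Set.ncard_le_ncard (edgeSet_mono hle)
  rw [Nat.card_coe_set_eq] at hT hF ⊢
  rw [edgeSet_sdiff, Set.ncard_sdiff (edgeSet_mono hle)]
  omega

theorem card_filter_adj [Fintype V] [DecidableRel G.Adj] :
    #{p : V × V | G.Adj p.1 p.2} = 2 * Nat.card G.edgeSet := by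
  rw [card_filter, Fintype.sum_prod_type]
  simp_rw [← card_filter, ← neighborFinset_eq_filter, card_neighborFinset_eq_degree]
  rw [sum_degrees_eq_twice_card_edges, edgeFinset_card, Nat.card_eq_fintype_card]

theorem mem_spanningTreesContaining_sup_edge_iff :
    T ∈ spanningTreesContaining (F ⊔ edge x y) ∧ ¬F.Reachable x y ↔
      T ∈ spanningTreesContaining F ∧ T.Adj x y ∧ ¬F.Adj x y := by
  constructor
  · rintro ⟨⟨hle, hc, ha⟩, hxy⟩
    have hne : x ≠ y := by rintro rfl; exact hxy .rfl
    exact ⟨⟨le_sup_left.trans hle, hc, ha⟩,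
      hle (.inr ((edge_adj ..).2 ⟨.inl ⟨rfl, rfl⟩, hne⟩)), fun h => hxy h.reachable⟩
  · rintro ⟨⟨hle, hc, ha⟩, hadj, hnadj⟩
    refine ⟨⟨sup_le hle ((edge_le_iff T).2 (.inr hadj)), hc, ha⟩, fun hxy => ?_⟩
    -- `xy` is a bridge of the tree `T`, and `F` avoids it
    have hle' : F ≤ T \ edge x y := sdiff_edge F hnadj ▸ sdiff_le_sdiff_right hle
    exact isAcyclic_iff_forall_adj_isBridge.1 ha hadj (hxy.mono hle')

theorem card_spanningTreesContaining_mul_eq_sum [Fintype V] [DecidableRel F.Reachable] :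
    Nat.card (spanningTreesContaining F) * (2 * (Nat.card F.ConnectedComponent - 1)) =
      ∑ p : V × V with ¬F.Reachable p.1 p.2,
        Nat.card (spanningTreesContaining (F ⊔ edge p.1 p.2)) := by
  classical
  have hfiber : ∀ T ∈ (spanningTreesContaining F).toFinset,
      #{p : V × V | T.Adj p.1 p.2 ∧ ¬F.Adj p.1 p.2} =
        2 * (Nat.card F.ConnectedComponent - 1) := by
    intro T hT
    rw [← card_edgeSet_sdiff_add_one (Set.mem_toFinset.1 hT), Nat.add_sub_cancel,
      ← card_filter_adj]
    simp only [sdiff_adj]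
  calc Nat.card (spanningTreesContaining F) * (2 * (Nat.card F.ConnectedComponent - 1))
      = ∑ T ∈ (spanningTreesContaining F).toFinset,
          #{p : V × V | T.Adj p.1 p.2 ∧ ¬F.Adj p.1 p.2} := by
        rw [sum_congr rfl hfiber, sum_const, smul_eq_mul, Nat.card_eq_card_toFinset]
    _ = ∑ p : V × V with ¬F.Reachable p.1 p.2,
          #(spanningTreesContaining (F ⊔ edge p.1 p.2)).toFinset := by
        simp_rw [card_eq_sum_ones]
        refine sum_comm' fun T p => ?_
        simp only [Set.mem_toFinset, mem_filter, mem_univ, true_and]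
        exact mem_spanningTreesContaining_sup_edge_iff.symm
    _ = _ := by simp_rw [Nat.card_eq_card_toFinset]

section SumInvCardSupp

variable {K : Type*} [Field K] [CharZero K] [Fintype V]

theorem sum_reachable_inv_card_supp [DecidableRel G.Reachable] (x : V) :
    ∑ y : V with G.Reachable x y, (Nat.card (G.connectedComponentMk y).supp : K)⁻¹ = 1 := by
  have hcard : #{y : V | G.Reachable x y} = Nat.card (G.connectedComponentMk x).supp := by
    classical
    rw [Nat.card_eq_card_toFinset]
    congr 1
    ext y
    simp [reachable_comm]
  rw [sum_congr rfl fun y hy => by rw [← ConnectedComponent.sound (mem_filter.1 hy).2], sum_const,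
    hcard, nsmul_eq_mul,
    mul_inv_cancel₀ (Nat.cast_ne_zero.2 (ConnectedComponent.card_supp_pos _).ne')]

theorem sum_inv_card_supp :
    ∑ y : V, (Nat.card (G.connectedComponentMk y).supp : K)⁻¹ =
      Nat.card G.ConnectedComponent := by
  classical
  calc ∑ y : V, (Nat.card (G.connectedComponentMk y).supp : K)⁻¹
      = ∑ c, ∑ y : V with G.connectedComponentMk y = c,
          (Nat.card (G.connectedComponentMk y).supp : K)⁻¹ := (sum_fiberwise _ _ _).symm
    _ = ∑ _c : G.ConnectedComponent, 1 := sum_congr rfl fun c _ => by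
        induction c using ConnectedComponent.ind with | h x => ?_
        simpa [ConnectedComponent.eq, reachable_comm] using
          sum_reachable_inv_card_supp (G := G) (K := K) x
    _ = Nat.card G.ConnectedComponent := by simp [Nat.card_eq_fintype_card]

theorem sum_not_reachable_inv_card_supp [DecidableRel G.Reachable] (x : V) :
    ∑ y : V with ¬G.Reachable x y, (Nat.card (G.connectedComponentMk y).supp : K)⁻¹ + 1 =
      Nat.card G.ConnectedComponent := by
  rw [← sum_reachable_inv_card_supp (G := G) x, sum_filter_not_add_sum_filter, sum_inv_card_supp]

theorem sum_not_reachable_pair_inv_card_supp [DecidableRel G.Reachable] :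
    ∑ p : V × V with ¬G.Reachable p.1 p.2,
        ((Nat.card (G.connectedComponentMk p.1).supp : K)⁻¹ +
          (Nat.card (G.connectedComponentMk p.2).supp : K)⁻¹) =
      2 * Fintype.card V * (Nat.card G.ConnectedComponent - 1) := by
  have hsnd : ∑ p : V × V with ¬G.Reachable p.1 p.2,
      (Nat.card (G.connectedComponentMk p.2).supp : K)⁻¹ =
        Fintype.card V * (Nat.card G.ConnectedComponent - 1) := by
    rw [sum_filter, Fintype.sum_prod_type]
    simp_rw [← sum_filter, eq_sub_of_add_eq (sum_not_reachable_inv_card_supp (G := G) (K := K) _),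
      sum_const, card_univ, nsmul_eq_mul]
  have hfst : ∑ p : V × V with ¬G.Reachable p.1 p.2,
      (Nat.card (G.connectedComponentMk p.1).supp : K)⁻¹ =
        ∑ p : V × V with ¬G.Reachable p.1 p.2,
          (Nat.card (G.connectedComponentMk p.2).supp : K)⁻¹ :=
    sum_equiv (Equiv.prodComm V V) (by simp [reachable_comm]) fun _ _ => rfl
  rw [sum_add_distrib, hfst, hsnd]
  ring

end SumInvCardSupp

theorem card_spanningTreesContaining_mul_sq_of_sup_edge [Fintype V] {k : ℕ}
    (hk : Nat.card F.ConnectedComponent = k + 2)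
    (hsup : ∀ u v, ¬F.Reachable u v →
      Nat.card (spanningTreesContaining (F ⊔ edge u v)) * Fintype.card V ^ 2 =
        (∏ᶠ c : (F ⊔ edge u v).ConnectedComponent, Nat.card c.supp) *
          Fintype.card V ^ (k + 1)) :
    Nat.card (spanningTreesContaining F) * Fintype.card V ^ 2 =
      (∏ᶠ c : F.ConnectedComponent, Nat.card c.supp) * Fintype.card V ^ (k + 2) := by
  classical
  set n := Fintype.card V
  set P := ∏ᶠ c : F.ConnectedComponent, Nat.card c.supp
  have hterm : ∀ p ∈ ({p : V × V | ¬F.Reachable p.1 p.2} : Finset (V × V)),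
      (Nat.card (spanningTreesContaining (F ⊔ edge p.1 p.2)) * n ^ 2 : ℚ) =
        P * n ^ (k + 1) * ((Nat.card (F.connectedComponentMk p.1).supp : ℚ)⁻¹ +
          (Nat.card (F.connectedComponentMk p.2).supp : ℚ)⁻¹) := by
    intro p hp
    replace hp := (mem_filter.1 hp).2
    rw [mul_right_comm, ← finprod_card_supp_sup_edge_eq_mul_inv hp]
    exact_mod_cast hsup p.1 p.2 hp
  have hdouble : (Nat.card (spanningTreesContaining F) * (2 * (k + 1)) : ℚ) =
      ∑ p : V × V with ¬F.Reachable p.1 p.2,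
        (Nat.card (spanningTreesContaining (F ⊔ edge p.1 p.2)) : ℚ) := by
    have := card_spanningTreesContaining_mul_eq_sum (F := F)
    rw [hk] at this
    exact_mod_cast this
  have hsum := sum_not_reachable_pair_inv_card_supp (G := F) (K := ℚ)
  rw [hk] at hsum
  have key : (Nat.card (spanningTreesContaining F) * n ^ 2 * (2 * (k + 1)) : ℚ) =
      P * n ^ (k + 2) * (2 * (k + 1)) :=
    calc (Nat.card (spanningTreesContaining F) * n ^ 2 * (2 * (k + 1)) : ℚ)
        = ∑ p : V × V with ¬F.Reachable p.1 p.2,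
            (Nat.card (spanningTreesContaining (F ⊔ edge p.1 p.2)) * n ^ 2 : ℚ) := by
          rw [← sum_mul, ← hdouble]
          ring
      _ = P * n ^ (k + 1) * (2 * n * (k + 1)) := by
          rw [sum_congr rfl hterm, ← mul_sum, hsum]
          push_cast
          ring
      _ = P * n ^ (k + 2) * (2 * (k + 1)) := by ring
  exact_mod_cast mul_right_cancel₀ (by positivity) key

theorem IsAcyclic.card_spanningTreesContaining_mul_sq [Fintype V] [Nonempty V]
    (hF : F.IsAcyclic) :
    Nat.card (spanningTreesContaining F) * Fintype.card V ^ 2 =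
      (∏ᶠ c : F.ConnectedComponent, Nat.card c.supp) *
        Fintype.card V ^ Nat.card F.ConnectedComponent := by
  refine hF.induction_on_sup_edge (P := fun F => Nat.card (spanningTreesContaining F) *
    Fintype.card V ^ 2 = (∏ᶠ c : F.ConnectedComponent, Nat.card c.supp) *
      Fintype.card V ^ Nat.card F.ConnectedComponent) (fun T hT => ?_) fun F _ hr ih => ?_
  · rw [hT.spanningTreesContaining_eq, Nat.card_unique, hT.connected.finprod_card_supp,
      connected_iff_card_connectedComponent_eq_one.1 hT.connected, Nat.card_eq_fintype_card]
    ring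
  · obtain ⟨k, hk⟩ : ∃ k, Nat.card F.ConnectedComponent = k + 2 :=
      ⟨_, (Nat.sub_add_cancel hr).symm⟩
    rw [hk]
    refine card_spanningTreesContaining_mul_sq_of_sup_edge hk fun u v h => ?_
    have := card_connectedComponent_sup_edge h
    rw [ih u v h, show Nat.card (F ⊔ edge u v).ConnectedComponent = k + 1 by omega]

end SimpleGraph

/-- Generalized Cayley formula: if `F` is a spanning forest of `K_n` whose connected
components have sizes `q_1, …, q_r`, then the number of spanning trees of `K_n`
containing `F` is `q_1 ⋯ q_r · n^(r-2)` (stated multiplied through by `n^2` to avoid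
negative exponents). -/
theorem count_trees_containing_forest (n : ℕ) (hn : 2 ≤ n)
    (F : SimpleGraph (Fin n)) (hF : F.IsAcyclic) :
    Nat.card {T : SimpleGraph (Fin n) // F ≤ T ∧ T.Connected ∧ T.IsAcyclic} * n ^ 2 =
      (∏ᶠ c : F.ConnectedComponent, Nat.card c.supp) *
        n ^ (Nat.card F.ConnectedComponent) := by
  have : Nonempty (Fin n) := ⟨⟨0, by omega⟩⟩
  have h := hF.card_spanningTreesContaining_mul_sq
  rw [Fintype.card_fin] at h
  exact h
end

section
/- For any edge e of K_n and any spanning forest F of K_n not containing e, if T is chosen uniformly at random among spanning trees of K_n containing F, then the probability that T contains e is at most 2/n. -/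
/-!
For a spanning tree `T ∋ xy` and a vertex `v`, delete `xy` from `T` and join `v` to whichever of
`x`, `y` lies in the other component of `T - xy`. The result is again a spanning tree containing
`F`, and `T` and `v` can be read back from it together with the side of `v`: if `v` was on the
`x`-side, it is the neighbour of `y` on the `x`–`y` path of the new tree, and then `T` is the new
tree with `vy` replaced by `xy`. So `(T, v) ↦ (new tree, side)` is injective, whence
`#{T ∋ e} · n ≤ 2 · #{T}`.
-/

open SimpleGraph

namespace SimpleGraph

variable {V : Type*} {G D F T T₁ T₂ : SimpleGraph V} {u v w x y v₁ v₂ : V}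

lemma Reachable.deleteEdges_or (h : G.Reachable v x) :
    (G.deleteEdges {s(x, y)}).Reachable v x ∨ (G.deleteEdges {s(x, y)}).Reachable v y := by
  classical
  obtain ⟨P, hP⟩ := h.exists_isPath
  by_cases heP : s(x, y) ∈ P.edges
  · have hyP := P.snd_mem_support_of_mem_edges heP
    have hxP₁ := Walk.endpoint_notMem_support_takeUntil hP hyP (P.adj_of_mem_edges heP).ne
    have heP₁ : s(x, y) ∉ (P.takeUntil y hyP).edges :=
      fun h ↦ hxP₁ <| (P.takeUntil y hyP).fst_mem_support_of_mem_edges h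
    exact .inr ⟨(P.takeUntil y hyP).toDeleteEdges {s(x, y)} (by grind)⟩
  · exact .inl ⟨P.toDeleteEdges {s(x, y)} (by grind)⟩

lemma IsAcyclic.not_reachable_deleteEdges (hT : T.IsAcyclic) (hxy : T.Adj x y) :
    ¬ (T.deleteEdges {s(x, y)}).Reachable x y :=
  isAcyclic_iff_forall_adj_isBridge.mp hT hxy

lemma deleteEdges_sup_edge_of_adj (hxy : T.Adj x y) : T.deleteEdges {s(x, y)} ⊔ edge x y = T :=
  sdiff_sup_cancel ((edge_le_iff _).mpr (.inr hxy))

lemma sup_edge_deleteEdges_of_not_adj (h : ¬ D.Adj v y) :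
    (D ⊔ edge v y).deleteEdges {s(v, y)} = D := by
  simpa [deleteEdges_sup] using h

lemma sup_edge_adj (h : u ≠ w) : (G ⊔ edge u w).Adj u w :=
  .inr ((edge_adj ..).mpr ⟨.inl ⟨rfl, rfl⟩, h⟩)

lemma IsTree.deleteEdges_sup_edge (hT : T.IsTree) (hxy : T.Adj x y)
    (hu : (T.deleteEdges {s(x, y)}).Reachable u x) (hw : (T.deleteEdges {s(x, y)}).Reachable w y) :
    (T.deleteEdges {s(x, y)} ⊔ edge u w).IsTree := by
  set D := T.deleteEdges {s(x, y)}
  have hnr : ¬ D.Reachable u w := fun h ↦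
    hT.isAcyclic.not_reachable_deleteEdges hxy (hu.symm.trans (h.trans hw))
  have huw : (D ⊔ edge u w).Adj u w := sup_edge_adj (by rintro rfl; exact hnr .rfl)
  refine ⟨(connected_iff_exists_forall_reachable _).2 ⟨x, fun v ↦ ?_⟩,
    (hT.isAcyclic.anti (deleteEdges_le _)).sup_edge_of_not_reachable hnr⟩
  rcases (hT.connected v x).deleteEdges_or (y := y) with h | h
  · exact (h.mono le_sup_left).symm
  · exact (hu.symm.mono le_sup_left).trans
      (huw.reachable.trans ((hw.trans h.symm).mono le_sup_left))

lemma not_reachable_deleteEdges_sup_edge (hD : ¬ D.Reachable x y) (hv : D.Reachable v x) :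
    ¬ ((D ⊔ edge v y).deleteEdges {s(v, y)}).Reachable x y := by
  rwa [sup_edge_deleteEdges_of_not_adj fun h ↦ hD (hv.symm.trans h.reachable)]

lemma IsAcyclic.eq_of_deleteEdges_sup_edge_eq (h₁ : T₁.IsAcyclic) (h₂ : T₂.IsAcyclic)
    (hxy₁ : T₁.Adj x y) (hxy₂ : T₂.Adj x y)
    (hv₁ : (T₁.deleteEdges {s(x, y)}).Reachable v₁ x)
    (hv₂ : (T₂.deleteEdges {s(x, y)}).Reachable v₂ x)
    (heq : T₁.deleteEdges {s(x, y)} ⊔ edge v₁ y = T₂.deleteEdges {s(x, y)} ⊔ edge v₂ y) :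
    T₁ = T₂ ∧ v₁ = v₂ := by
  have hD₁ := h₁.not_reachable_deleteEdges hxy₁
  have hD₂ := h₂.not_reachable_deleteEdges hxy₂
  obtain ⟨p, hp⟩ : ∃ p : (T₁.deleteEdges {s(x, y)} ⊔ edge v₁ y).Walk x y, p.IsPath :=
    ((hv₁.symm.mono le_sup_left).trans
      (sup_edge_adj (by rintro rfl; exact hD₁ hv₁.symm)).reachable).exists_isPath
  -- Deleting `v₁y` or `v₂y` from the common graph separates `x` from `y`, so both edges lie on
  -- its `x`–`y` path, and on a path only the last edge ends at `y`.
  have hv : v₁ = v₂ := by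
    have hm₁ := p.mem_edges_of_not_reachable_deleteEdges
      (not_reachable_deleteEdges_sup_edge hD₁ hv₁)
    have hm₂ := p.mem_edges_of_not_reachable_deleteEdges
      (heq ▸ not_reachable_deleteEdges_sup_edge hD₂ hv₂)
    exact (hp.eq_penultimate_of_mem_edges (Sym2.eq_swap (a := v₁) (b := y) ▸ hm₁)).trans
      (hp.eq_penultimate_of_mem_edges (Sym2.eq_swap (a := v₂) (b := y) ▸ hm₂)).symm
  subst hv
  have hD : T₁.deleteEdges {s(x, y)} = T₂.deleteEdges {s(x, y)} := by
    simpa only [sup_edge_deleteEdges_of_not_adj fun h ↦ hD₁ (hv₁.symm.trans h.reachable),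
      sup_edge_deleteEdges_of_not_adj fun h ↦ hD₂ (hv₂.symm.trans h.reachable)]
      using congrArg (·.deleteEdges {s(v₁, y)}) heq
  exact ⟨by rw [← deleteEdges_sup_edge_of_adj hxy₁, hD, deleteEdges_sup_edge_of_adj hxy₂], rfl⟩

open Classical in
noncomputable def exchange (T : SimpleGraph V) (x y v : V) : SimpleGraph V :=
  if (T.deleteEdges {s(x, y)}).Reachable v x then T.deleteEdges {s(x, y)} ⊔ edge v y
  else T.deleteEdges {s(x, y)} ⊔ edge v x

lemma exchange_of_not_reachable (hT : T.Connected)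
    (hv : ¬ (T.deleteEdges {s(x, y)}).Reachable v x) :
    T.exchange x y v = T.deleteEdges {s(y, x)} ⊔ edge v x ∧
      (T.deleteEdges {s(y, x)}).Reachable v y := by
  rw [Sym2.eq_swap (a := y)]
  exact ⟨if_neg hv, (hT v x).deleteEdges_or.resolve_left hv⟩

lemma IsTree.exchange (hT : T.IsTree) (hxy : T.Adj x y) (v : V) : (T.exchange x y v).IsTree := by
  by_cases hv : (T.deleteEdges {s(x, y)}).Reachable v x
  · rw [SimpleGraph.exchange, if_pos hv]
    exact hT.deleteEdges_sup_edge hxy hv .rfl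
  · obtain ⟨heq, hvy⟩ := exchange_of_not_reachable hT.connected hv
    exact heq ▸ hT.deleteEdges_sup_edge hxy.symm hvy .rfl

lemma le_exchange (hF : F ≤ T) (hxy : s(x, y) ∉ F.edgeSet) (v : V) : F ≤ T.exchange x y v := by
  have hFD : F ≤ T.deleteEdges {s(x, y)} :=
    deleteEdges_eq_self.mpr (Set.disjoint_singleton_right.mpr hxy) ▸ deleteEdges_mono hF
  unfold SimpleGraph.exchange
  split_ifs <;> exact hFD.trans le_sup_left

lemma IsTree.eq_of_exchange_eq (h₁ : T₁.IsTree) (h₂ : T₂.IsTree)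
    (hxy₁ : T₁.Adj x y) (hxy₂ : T₂.Adj x y)
    (hside : (T₁.deleteEdges {s(x, y)}).Reachable v₁ x ↔
      (T₂.deleteEdges {s(x, y)}).Reachable v₂ x)
    (heq : T₁.exchange x y v₁ = T₂.exchange x y v₂) : T₁ = T₂ ∧ v₁ = v₂ := by
  by_cases hv₁ : (T₁.deleteEdges {s(x, y)}).Reachable v₁ x
  · have hv₂ := hside.mp hv₁
    rw [SimpleGraph.exchange, if_pos hv₁, SimpleGraph.exchange, if_pos hv₂] at heq
    exact h₁.isAcyclic.eq_of_deleteEdges_sup_edge_eq h₂.isAcyclic hxy₁ hxy₂ hv₁ hv₂ heq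
  · have hv₂ := hside.not.mp hv₁
    obtain ⟨heq₁, hv₁⟩ := exchange_of_not_reachable h₁.connected hv₁
    obtain ⟨heq₂, hv₂⟩ := exchange_of_not_reachable h₂.connected hv₂
    rw [heq₁, heq₂] at heq
    exact h₁.isAcyclic.eq_of_deleteEdges_sup_edge_eq h₂.isAcyclic hxy₁.symm hxy₂.symm hv₁ hv₂ heq

theorem card_isTree_mem_edgeSet_mul_le [Finite V] (F : SimpleGraph V) {e : Sym2 V}
    (he : e ∉ F.edgeSet) :
    Nat.card {T : SimpleGraph V // F ≤ T ∧ e ∈ T.edgeSet ∧ T.IsTree} * Nat.card V ≤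
      2 * Nat.card {T : SimpleGraph V // F ≤ T ∧ T.IsTree} := by
  classical
  induction e using Sym2.ind with | _ x y =>
  let f (p : {T : SimpleGraph V // F ≤ T ∧ s(x, y) ∈ T.edgeSet ∧ T.IsTree} × V) :
      {T : SimpleGraph V // F ≤ T ∧ T.IsTree} × Bool :=
    (⟨p.1.1.exchange x y p.2, le_exchange p.1.2.1 he p.2, p.1.2.2.2.exchange p.1.2.2.1 p.2⟩,
      decide ((p.1.1.deleteEdges {s(x, y)}).Reachable p.2 x))
  have hf : f.Injective := by
    rintro ⟨⟨T₁, _, hxy₁, h₁⟩, v₁⟩ ⟨⟨T₂, _, hxy₂, h₂⟩, v₂⟩ h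
    simp only [f, Prod.mk.injEq, Subtype.mk.injEq, decide_eq_decide] at h
    obtain ⟨rfl, rfl⟩ := h₁.eq_of_exchange_eq h₂ hxy₁ hxy₂ h.2 h.1
    rfl
  simpa [Nat.card_prod, mul_comm] using Nat.card_le_card_of_injective f hf

end SimpleGraph

theorem prob_edge_le_general (n : ℕ) (hn : 2 ≤ n)
    (F : SimpleGraph (Fin n))
    (e : Sym2 (Fin n)) (heF : e ∉ F.edgeSet) :
    (Nat.card {T : SimpleGraph (Fin n) //
        F ≤ T ∧ e ∈ T.edgeSet ∧ T.Connected ∧ T.IsAcyclic} : ℝ) /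
      (Nat.card {T : SimpleGraph (Fin n) // F ≤ T ∧ T.Connected ∧ T.IsAcyclic} : ℝ)
      ≤ 2 / n := by
  have key := card_isTree_mem_edgeSet_mul_le F heF
  have hTree (T : SimpleGraph (Fin n)) : T.IsTree ↔ T.Connected ∧ T.IsAcyclic :=
    ⟨fun h ↦ ⟨h.connected, h.isAcyclic⟩, fun h ↦ ⟨h.1, h.2⟩⟩
  simp only [hTree, Nat.card_fin] at key
  rcases (Nat.card {T : SimpleGraph (Fin n) // F ≤ T ∧ T.Connected ∧ T.IsAcyclic}).eq_zero_or_pos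
    with h | h
  · simp only [h, Nat.cast_zero, div_zero]
    positivity
  · rw [div_le_div_iff₀ (by exact_mod_cast h) (by exact_mod_cast (by omega : 0 < n))]
    exact_mod_cast key

/-- If `T` is uniformly random among spanning trees of `K_n` containing the spanning
forest `F`, and `e` is an edge of `K_n` not in `F`, then `P(e ∈ T) ≤ 2/n`. -/
theorem prob_edge_le (n : ℕ) (hn : 2 ≤ n)
    (F : SimpleGraph (Fin n)) (hF : F.IsAcyclic)
    (e : Sym2 (Fin n)) (he : ¬ e.IsDiag) (heF : e ∉ F.edgeSet) :
    (Nat.card {T : SimpleGraph (Fin n) //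
        F ≤ T ∧ e ∈ T.edgeSet ∧ T.Connected ∧ T.IsAcyclic} : ℝ) /
      (Nat.card {T : SimpleGraph (Fin n) // F ≤ T ∧ T.Connected ∧ T.IsAcyclic} : ℝ)
      ≤ 2 / n :=
  prob_edge_le_general n hn F e heF
end

section
/- Let A_1, ..., A_n be events with negative dependency graph G, and suppose there exist real numbers x_1, ..., x_n ∈ (0,1) such that P(A_i) ≤ x_i · ∏_{j : (j,i) ∈ E(G)} (1 − x_j) for every i. Then P(⋀_{i=1}^n ¬A_i) ≥ ∏_{j=1}^n (1 − x_j). -/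
/-!
Write `P(S)` for the probability that none of the events `A j`, `j ∈ S`, occurs. Removing one
more event gives `P(insert j S) = P(S) - μ(A j ∩ ⋂_{S} A jᶜ)`, so everything reduces to the
conditional bound `μ(A i ∩ ⋂_{S} A jᶜ) ≤ x i · P(S)` for `i ∉ S`: peeling the events off one at
a time then yields `P(S) ≥ ∏_{S} (1 - x j)`. The conditional bound is proved by strong induction
on `S`: split `S` into the neighbours `S₁` of `i` and the rest `S₂`; negative dependence bounds
the left side by `μ(A i) · P(S₂) ≤ x i ∏_{S₁} (1 - x j) · P(S₂)`, and the peeling argument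
applied on top of `S₂`, with the induction hypothesis for the strictly smaller sets in between,
gives `∏_{S₁} (1 - x j) · P(S₂) ≤ P(S)`.
-/

open MeasureTheory

namespace LopsidedLLL

variable {Ω ι : Type*} [MeasurableSpace Ω] {μ : Measure Ω} [DecidableEq ι] {A : ι → Set Ω}
  {x : ι → ℝ}

/-- The negative dependency condition in product form, which needs no proviso on the conditioning
event having positive probability. -/
def IsNegDepGraph (μ : Measure Ω) (A : ι → Set Ω) (G : SimpleGraph ι) : Prop :=
  ∀ i (I : Finset ι), (∀ j ∈ I, ¬ G.Adj j i ∧ j ≠ i) →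
    μ.real (A i ∩ ⋂ j ∈ I, (A j)ᶜ) ≤ μ.real (A i) * μ.real (⋂ j ∈ I, (A j)ᶜ)

theorem measureReal_biInter_compl_insert [IsFiniteMeasure μ] {i : ι} (hA : MeasurableSet (A i))
    (S : Finset ι) :
    μ.real (⋂ j ∈ insert i S, (A j)ᶜ) =
      μ.real (⋂ j ∈ S, (A j)ᶜ) - μ.real (A i ∩ ⋂ j ∈ S, (A j)ᶜ) := by
  rw [Finset.set_biInter_insert, ← Set.sdiff_eq_compl_inter, Set.inter_comm, eq_sub_iff_add_eq,
    measureReal_sdiff_add_inter hA]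

theorem prod_mul_measureReal_le_measureReal_union [IsFiniteMeasure μ]
    (hA : ∀ i, MeasurableSet (A i)) {R T : Finset ι} (hRT : Disjoint R T)
    (hx : ∀ j ∈ T, x j ≤ 1)
    (hcond : ∀ j ∈ T, ∀ U ⊆ R ∪ T, j ∉ U →
      μ.real (A j ∩ ⋂ k ∈ U, (A k)ᶜ) ≤ x j * μ.real (⋂ k ∈ U, (A k)ᶜ)) :
    (∏ j ∈ T, (1 - x j)) * μ.real (⋂ j ∈ R, (A j)ᶜ) ≤ μ.real (⋂ j ∈ R ∪ T, (A j)ᶜ) := by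
  induction T using Finset.induction_on with
  | empty => simp
  | @insert j T hjT ih =>
    have hjRT : j ∉ R ∪ T :=
      Finset.notMem_union.2 ⟨Finset.disjoint_right.1 hRT (Finset.mem_insert_self j T), hjT⟩
    have hRT' : Disjoint R T := hRT.mono_right (Finset.subset_insert j T)
    have hstep := hcond j (Finset.mem_insert_self j T) (R ∪ T)
      (Finset.union_subset_union_right (Finset.subset_insert j T)) hjRT
    have hprev := ih hRT' (fun k hk ↦ hx k (Finset.mem_insert_of_mem hk))
      (fun k hk U hU ↦ hcond k (Finset.mem_insert_of_mem hk) U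
        (hU.trans (Finset.union_subset_union_right (Finset.subset_insert j T))))
    have hxj : 0 ≤ 1 - x j := sub_nonneg.2 (hx j (Finset.mem_insert_self j T))
    rw [Finset.prod_insert hjT, Finset.union_insert, measureReal_biInter_compl_insert (hA j),
      mul_assoc]
    calc (1 - x j) * ((∏ k ∈ T, (1 - x k)) * μ.real (⋂ k ∈ R, (A k)ᶜ))
        ≤ (1 - x j) * μ.real (⋂ k ∈ R ∪ T, (A k)ᶜ) := mul_le_mul_of_nonneg_left hprev hxj
      _ ≤ _ := by linarith

variable [Fintype ι] {G : SimpleGraph ι} [DecidableRel G.Adj]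

theorem IsNegDepGraph.measureReal_inter_biInter_compl_le [IsFiniteMeasure μ]
    (hG : IsNegDepGraph μ A G) (hA : ∀ i, MeasurableSet (A i))
    (hx₀ : ∀ i, 0 ≤ x i) (hx₁ : ∀ i, x i ≤ 1)
    (hbound : ∀ i, μ.real (A i) ≤
      x i * ∏ j ∈ Finset.univ.filter (fun j => G.Adj j i), (1 - x j))
    (S : Finset ι) {i : ι} (hi : i ∉ S) :
    μ.real (A i ∩ ⋂ j ∈ S, (A j)ᶜ) ≤ x i * μ.real (⋂ j ∈ S, (A j)ᶜ) := by
  induction S using Finset.strongInduction generalizing i with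
  | H S ih =>
    set S₁ := S.filter (fun j => G.Adj j i)
    set S₂ := S.filter (fun j => ¬ G.Adj j i)
    have hS : S₂ ∪ S₁ = S := by rw [Finset.union_comm, Finset.filter_union_filter_not_eq]
    have hpeel : (∏ j ∈ S₁, (1 - x j)) * μ.real (⋂ j ∈ S₂, (A j)ᶜ) ≤
        μ.real (⋂ j ∈ S, (A j)ᶜ) := by
      refine hS ▸ prod_mul_measureReal_le_measureReal_union hA
        (Finset.disjoint_filter_filter_not S S _).symm (fun j _ ↦ hx₁ j) ?_
      intro j hj U hU hjU
      rw [hS] at hU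
      exact ih U ((Finset.ssubset_iff_of_subset hU).2 ⟨j, Finset.mem_of_mem_filter j hj, hjU⟩) hjU
    have hneighbours : ∏ j ∈ Finset.univ.filter (fun j => G.Adj j i), (1 - x j) ≤
        ∏ j ∈ S₁, (1 - x j) :=
      Finset.prod_anti_set_of_le_one (fun j ↦ sub_nonneg.2 (hx₁ j))
        (fun j ↦ sub_le_self 1 (hx₀ j)) (Finset.filter_subset_filter _ (Finset.subset_univ S))
    calc μ.real (A i ∩ ⋂ j ∈ S, (A j)ᶜ)
        ≤ μ.real (A i ∩ ⋂ j ∈ S₂, (A j)ᶜ) :=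
          measureReal_mono (Set.inter_subset_inter_right _
            (Set.biInter_subset_biInter_left (s := (S : Set ι)) (Finset.filter_subset _ S)))
      _ ≤ μ.real (A i) * μ.real (⋂ j ∈ S₂, (A j)ᶜ) :=
          hG i S₂ fun j hj ↦ ⟨(Finset.mem_filter.1 hj).2, ne_of_mem_of_not_mem
            (Finset.mem_of_mem_filter j hj) hi⟩
      _ ≤ x i * ((∏ j ∈ S₁, (1 - x j)) * μ.real (⋂ j ∈ S₂, (A j)ᶜ)) := by
          rw [← mul_assoc]
          gcongr
          exact (hbound i).trans (mul_le_mul_of_nonneg_left hneighbours (hx₀ i))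
      _ ≤ x i * μ.real (⋂ j ∈ S, (A j)ᶜ) := by gcongr; exact hx₀ i

theorem IsNegDepGraph.prod_le_measureReal_iInter_compl [IsProbabilityMeasure μ]
    (hG : IsNegDepGraph μ A G) (hA : ∀ i, MeasurableSet (A i))
    (hx₀ : ∀ i, 0 ≤ x i) (hx₁ : ∀ i, x i ≤ 1)
    (hbound : ∀ i, μ.real (A i) ≤
      x i * ∏ j ∈ Finset.univ.filter (fun j => G.Adj j i), (1 - x j)) :
    ∏ j, (1 - x j) ≤ μ.real (⋂ i, (A i)ᶜ) := by
  simpa using prod_mul_measureReal_le_measureReal_union hA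
    (Finset.disjoint_empty_left Finset.univ) (fun j _ ↦ hx₁ j) fun j _ U _ hjU ↦
      hG.measureReal_inter_biInter_compl_le hA hx₀ hx₁ hbound U hjU

end LopsidedLLL

/-- The Lopsided Lovász Local Lemma. -/
theorem lopsided_LLL {Ω : Type*} [MeasurableSpace Ω] (μ : Measure Ω)
    [IsProbabilityMeasure μ] (n : ℕ) (A : Fin n → Set Ω)
    (hA : ∀ i, MeasurableSet (A i)) (G : SimpleGraph (Fin n)) [DecidableRel G.Adj]
    (hneg : ∀ i : Fin n, ∀ I : Finset (Fin n),
      (∀ j ∈ I, ¬ G.Adj j i ∧ j ≠ i) →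
        (μ (A i ∩ ⋂ j ∈ I, (A j)ᶜ)).toReal ≤
          (μ (A i)).toReal * (μ (⋂ j ∈ I, (A j)ᶜ)).toReal)
    (x : Fin n → ℝ) (hx : ∀ i, x i ∈ Set.Ioo (0 : ℝ) 1)
    (hbound : ∀ i, (μ (A i)).toReal ≤
      x i * ∏ j ∈ Finset.univ.filter (fun j => G.Adj j i), (1 - x j)) :
    ∏ j, (1 - x j) ≤ (μ (⋂ i, (A i)ᶜ)).toReal :=
  LopsidedLLL.IsNegDepGraph.prod_le_measureReal_iInter_compl hneg hA
    (fun i ↦ (hx i).1.le) (fun i ↦ (hx i).2.le) hbound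
end

section
/- For n ≥ 2 vertices labeled 1,...,n and indeterminates x_1,...,x_n: ∑_{T spanning tree of K_n} ∏_{i=1}^n x_i^{deg_T(i)} = x_1·x_2·...·x_n·(x_1 + x_2 + ... + x_n)^{n−2}. -/
/-!
Root a spanning tree `T` at a vertex `r` and let `p` send every other vertex to its neighbour
on the path towards `r`. This is a bijection between spanning trees and parent functions
without cycles, and the edges of `T` are the pairs `{j, p j}` with `j ≠ r`, so
`∏ᵢ xᵢ ^ deg_T(i) = ∏_{j ≠ r} xⱼ x_{p j}`. It remains to show that the parent functions on a
set `S ∌ r` satisfy `∑_p ∏_{j ∈ S} x_{p j} = x_r (x_r + ∑_{j ∈ S} xⱼ) ^ (|S| - 1)`. Induct on `S`: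
fix `m ∈ S` and `w = p m`, and contract the edge `m → w`, re-attaching the children of `m` to `w`.
The children of `m` form an arbitrary subset of the children of `w` in the contracted function,
so summing over that subset gives the contracted function the weights `x` with `x_w` replaced by
`x_w + x_m`, and the total weight is the same.
-/

open Finset SimpleGraph

lemma Finset.prod_add_ite_eq_sum_powerset {ι R : Type*} [DecidableEq ι] [CommSemiring R]
    (s : Finset ι) (P : ι → Prop) [DecidablePred P] (c : R) (g : ι → R) :
    ∏ j ∈ s, (g j + if P j then c else 0) =
      ∑ U ∈ {j ∈ s | P j}.powerset, c ^ #U * ∏ j ∈ s \ U, g j := by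
  simp_rw [add_comm (g _), prod_add]
  rw [← sum_subset (powerset_mono.2 (filter_subset P s))]
  · refine sum_congr rfl fun U hU => ?_
    rw [prod_congr rfl fun j hj => if_pos (mem_filter.1 (mem_powerset.1 hU hj)).2, prod_const]
  · intro U hU hUP
    obtain ⟨j, hjU, hj⟩ := not_subset.1 (mt mem_powerset.2 hUP)
    rw [prod_eq_zero hjU (if_neg fun hP => hj (mem_filter.2 ⟨mem_powerset.1 hU hjU, hP⟩)),
      zero_mul]

lemma SimpleGraph.prod_pow_degree {V M : Type*} [Fintype V] [DecidableEq V] [CommMonoid M]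
    (G : SimpleGraph V) [DecidableRel G.Adj] (x : V → M) :
    ∏ v, x v ^ G.degree v = ∏ e ∈ G.edgeFinset, ∏ v ∈ e.toFinset, x v := by
  simp_rw [← card_incidenceFinset_eq_degree, incidenceFinset_eq_filter, ← prod_const]
  exact prod_comm' fun v e => by simp [Sym2.mem_toFinset, and_comm]

lemma Finset.ne_of_mem_insert_erase {V : Type*} [DecidableEq V] {S : Finset V} {r m w : V}
    (hr : r ∉ S) (hm : m ∈ S) (hw : w ∈ insert r (S.erase m)) : w ≠ m := by
  rintro rfl
  simp only [mem_insert, mem_erase, ne_eq, not_true_eq_false, false_and, or_false] at hw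
  exact hr (hw ▸ hm)

variable {V : Type*}

def parentGraph (p : V → V) : SimpleGraph V := fromRel fun a b => p a = b

lemma parentGraph_adj {p : V → V} {a b : V} :
    (parentGraph p).Adj a b ↔ a ≠ b ∧ (p a = b ∨ p b = a) :=
  fromRel_adj _ _ _

variable [DecidableEq V] {S U : Finset V} {r m w v : V} {p p' : V → V}

/-- Contracts the edge `m → w`, where `w = p m`: the children of `m` are re-attached to `w`. -/
def contractEdge (m w : V) (p : V → V) : V → V :=
  Function.update (fun j => if p j = m then w else p j) m m

def expandEdge (m w : V) (p : V → V) (U : Finset V) : V → V :=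
  fun j => if j = m then w else if j ∈ U then m else p j

lemma prod_expandEdge {R : Type*} [CommMonoid R] (x : V → R) (hm : m ∈ S)
    (hU : U ⊆ S.erase m) :
    ∏ j ∈ S, x (expandEdge m w p' U j) = x w * (x m ^ #U * ∏ j ∈ S.erase m \ U, x (p' j)) := by
  have hUm : ∀ j ∈ U, j ≠ m := fun j hj => (mem_erase.1 (hU hj)).1
  rw [← mul_prod_erase S _ hm, ← prod_sdiff hU, mul_comm (∏ j ∈ S.erase m \ U, _)]
  congr 2
  · simp [expandEdge]
  · rw [← prod_const]
    exact prod_congr rfl fun j hj => by simp [expandEdge, hUm j hj, hj]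
  · refine prod_congr rfl fun j hj => ?_
    obtain ⟨hj', hjU⟩ := mem_sdiff.1 hj
    simp [expandEdge, (mem_erase.1 hj').1, hjU]

/-- `p` is a parent function on `S` with root `r ∉ S`: it fixes every vertex outside `S`, and
a height function decreasing along `p` on `S` certifies that iterating `p` from any vertex of `S`
reaches `r`. -/
def IsArborescence (S : Finset V) (r : V) (p : V → V) : Prop :=
  (∀ j ∉ S, p j = j) ∧ ∃ h : V → ℕ, ∀ j ∈ S, p j ∈ insert r S ∧ h (p j) < h j

namespace IsArborescence

lemma apply_ne_self (hp : IsArborescence S r p) (hv : v ∈ S) : p v ≠ v := by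
  obtain ⟨-, h, hh⟩ := hp
  exact fun hfix => (hh v hv).2.ne (by rw [hfix])

lemma apply_mem_insert_erase (hp : IsArborescence S r p) (hv : v ∈ S) :
    p v ∈ insert r (S.erase v) := by
  simpa [hp.apply_ne_self hv] using (hp.2.choose_spec v hv).1

lemma apply_ne_of_notMem (hp : IsArborescence S r p) (hv : v ∉ insert r S) {j : V}
    (hj : j ≠ v) : p j ≠ v := by
  obtain ⟨hfix, _, hh⟩ := hp
  by_cases hjS : j ∈ S
  · exact fun h => hv (h ▸ (hh j hjS).1)
  · rwa [hfix j hjS]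

lemma apply_apply_ne (hp : IsArborescence S r p) (hr : r ∉ S) (hv : v ∈ S) : p (p v) ≠ v := by
  obtain ⟨hfix, h, hh⟩ := hp
  rcases mem_insert.1 (hh v hv).1 with hpv | hpv
  · rw [hpv, hfix r hr]
    exact fun hrv => hr (hrv ▸ hv)
  · exact fun hcyc => ((hh _ hpv).2.trans (hh v hv).2).ne (by rw [hcyc])

lemma injOn_sym2_mk (hp : IsArborescence S r p) (hr : r ∉ S) :
    Set.InjOn (fun j => s(j, p j)) S := by
  intro j hj k hk hjk
  rcases Sym2.eq_iff.1 hjk with ⟨h, -⟩ | ⟨hjpk, hpjk⟩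
  · exact h
  · exact absurd (by rw [← hjpk, hpjk]) (hp.apply_apply_ne hr hk)

end IsArborescence

lemma isArborescence_contractEdge (hp : IsArborescence S r p) (hm : m ∈ S) (hpm : p m = w) :
    IsArborescence (S.erase m) r (contractEdge m w p) := by
  obtain ⟨hfix, h, hh⟩ := hp
  refine ⟨fun j hj => ?_, h, fun j hj => ?_⟩
  · rcases eq_or_ne j m with rfl | hjm
    · simp [contractEdge]
    · have hjS : j ∉ S := fun hjS => hj (mem_erase.2 ⟨hjm, hjS⟩)
      simp [contractEdge, hjm, hfix j hjS]
  obtain ⟨hjm, hjS⟩ := mem_erase.1 hj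
  by_cases hpj : p j = m
  · simp only [contractEdge, Function.update_of_ne hjm, hpj, if_true]
    refine ⟨hpm ▸ IsArborescence.apply_mem_insert_erase ⟨hfix, h, hh⟩ hm, ?_⟩
    calc h w = h (p m) := by rw [hpm]
      _ < h m := (hh m hm).2
      _ = h (p j) := by rw [hpj]
      _ < h j := (hh j hjS).2
  · simp only [contractEdge, Function.update_of_ne hjm, hpj, if_false]
    refine ⟨?_, (hh j hjS).2⟩
    have := (hh j hjS).1
    simp only [mem_insert, mem_erase] at this ⊢
    tauto

lemma isArborescence_expandEdge (hp' : IsArborescence (S.erase m) r p') (hr : r ∉ S) (hm : m ∈ S)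
    (hw : w ∈ insert r (S.erase m)) (hU : U ⊆ {j ∈ S.erase m | p' j = w}) :
    IsArborescence S r (expandEdge m w p' U) := by
  have hmr : m ≠ r := fun h => hr (h ▸ hm)
  have hwm : w ≠ m := ne_of_mem_insert_erase hr hm hw
  have hpm : ∀ j ≠ m, p' j ≠ m := fun j => hp'.apply_ne_of_notMem (by simp [hmr])
  have hUS : ∀ j ∈ U, j ∈ S.erase m ∧ p' j = w := fun j hj => mem_filter.1 (hU hj)
  obtain ⟨hfix, h, hh⟩ := hp'
  -- heights `2 h` off `m`, and `m` squeezed in between `w` and the children of `m`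
  refine ⟨fun j hj => ?_, Function.update (2 * h) m (2 * h w + 1), fun j hj => ?_⟩
  · have hjm : j ≠ m := fun h => hj (h ▸ hm)
    have hjU : j ∉ U := fun h => hj (mem_of_mem_erase (hUS j h).1)
    simp [expandEdge, hjm, hjU, hfix j (fun h => hj (mem_of_mem_erase h))]
  rcases eq_or_ne j m with rfl | hjm
  · simp only [expandEdge, if_true, Function.update_of_ne hwm, Function.update_self,
      Pi.mul_apply]
    refine ⟨?_, by simp⟩
    simp only [mem_insert, mem_erase] at hw ⊢
    tauto
  by_cases hjU : j ∈ U
  · obtain ⟨hjS', hpj⟩ := hUS j hjU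
    simp only [expandEdge, hjm, hjU, if_true, if_false, Function.update_self,
      Function.update_of_ne hjm, Pi.mul_apply, Pi.ofNat_apply]
    refine ⟨mem_insert_of_mem hm, ?_⟩
    have := (hh j hjS').2
    rw [hpj] at this
    omega
  · have hjS' : j ∈ S.erase m := mem_erase.2 ⟨hjm, hj⟩
    simp only [expandEdge, hjm, hjU, if_false, Function.update_of_ne (hpm j hjm),
      Function.update_of_ne hjm, Pi.mul_apply, Pi.ofNat_apply]
    refine ⟨?_, by have := (hh j hjS').2; omega⟩
    have := (hh j hjS').1
    simp only [mem_insert, mem_erase] at this ⊢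
    tauto

variable [Fintype V]

lemma expandEdge_contractEdge (hpm : p m = w) :
    expandEdge m w (contractEdge m w p) {j | p j = m} = p := by
  funext j
  rcases eq_or_ne j m with rfl | hjm
  · simp [expandEdge, hpm]
  by_cases hpj : p j = m
  · simp [expandEdge, hjm, hpj]
  · simp [expandEdge, contractEdge, hjm, hpj]

lemma contractEdge_expandEdge (hp' : IsArborescence (S.erase m) r p') (hr : r ∉ S) (hm : m ∈ S)
    (hwm : w ≠ m) (hU : U ⊆ {j ∈ S.erase m | p' j = w}) :
    contractEdge m w (expandEdge m w p' U) = p' ∧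
      ({j | expandEdge m w p' U j = m} : Finset V) = U := by
  have hmr : m ≠ r := fun h => hr (h ▸ hm)
  have hpm : ∀ j ≠ m, p' j ≠ m := fun j => hp'.apply_ne_of_notMem (by simp [hmr])
  have hUm : ∀ j ∈ U, j ≠ m ∧ p' j = w := fun j hj => by
    obtain ⟨hjS, hpj⟩ := mem_filter.1 (hU hj)
    exact ⟨(mem_erase.1 hjS).1, hpj⟩
  constructor
  · funext j
    rcases eq_or_ne j m with rfl | hjm
    · simp [contractEdge, hp'.1 j (notMem_erase j S)]
    by_cases hjU : j ∈ U
    · simp [contractEdge, expandEdge, hjm, hjU, (hUm j hjU).2]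
    · simp [contractEdge, expandEdge, hjm, hjU, hpm j hjm]
  · refine Finset.ext fun j => ?_
    rw [mem_filter_univ, expandEdge]
    rcases eq_or_ne j m with rfl | hjm
    · simpa [hwm] using fun h => (hUm j h).1 rfl
    by_cases hjU : j ∈ U <;> simp [hjm, hjU, hpm j hjm]

open Classical in
noncomputable def arborescences (S : Finset V) (r : V) : Finset (V → V) :=
  {p | IsArborescence S r p}

lemma mem_arborescences : p ∈ arborescences S r ↔ IsArborescence S r p := by
  simp [arborescences]

lemma arborescences_empty : arborescences (∅ : Finset V) r = {id} := by
  ext p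
  simp [mem_arborescences, IsArborescence, funext_iff]

lemma sum_arborescences_filter_apply_eq {M : Type*} [AddCommMonoid M] (f : (V → V) → M)
    (hr : r ∉ S) (hm : m ∈ S) (hw : w ∈ insert r (S.erase m)) :
    ∑ p ∈ arborescences S r with p m = w, f p =
      ∑ q ∈ (arborescences (S.erase m) r).sigma
          (fun p' => ({j ∈ S.erase m | p' j = w} : Finset V).powerset),
        f (expandEdge m w q.1 q.2) := by
  have hwm : w ≠ m := ne_of_mem_insert_erase hr hm hw
  symm
  refine sum_nbij' (fun q => expandEdge m w q.1 q.2)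
    (fun p => ⟨contractEdge m w p, ({j | p j = m} : Finset V)⟩) ?_ ?_ ?_ ?_ fun _ _ => rfl
  · rintro ⟨p', U⟩ hq
    obtain ⟨hp', hU⟩ := mem_sigma.1 hq
    exact mem_filter.2 ⟨mem_arborescences.2 (isArborescence_expandEdge
      (mem_arborescences.1 hp') hr hm hw (mem_powerset.1 hU)), by simp [expandEdge]⟩
  · intro p hp
    obtain ⟨hp, hpm⟩ := mem_filter.1 hp
    have hp := mem_arborescences.1 hp
    refine mem_sigma.2 ⟨mem_arborescences.2 (isArborescence_contractEdge hp hm hpm),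
      mem_powerset.2 fun j hj => ?_⟩
    have hpj : p j = m := (mem_filter.1 hj).2
    have hjm : j ≠ m := fun h => hwm (by rw [← hpm, ← h, hpj, h])
    have hjS : j ∈ S := by
      by_contra hjS
      exact hjm (by rw [← hpj, hp.1 j hjS])
    dsimp only
    rw [mem_filter, contractEdge, Function.update_of_ne hjm, if_pos hpj]
    exact ⟨mem_erase.2 ⟨hjm, hjS⟩, rfl⟩
  · rintro ⟨p', U⟩ hq
    obtain ⟨hp', hU⟩ := mem_sigma.1 hq
    obtain ⟨h1, h2⟩ := contractEdge_expandEdge (mem_arborescences.1 hp') hr hm hwm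
      (mem_powerset.1 hU)
    simp only [h1, h2]
  · intro p hp
    exact expandEdge_contractEdge (mem_filter.1 hp).2

lemma sum_prod_arborescences_filter_apply_eq {R : Type*} [CommSemiring R] (x : V → R)
    (hr : r ∉ S) (hm : m ∈ S) (hw : w ∈ insert r (S.erase m)) :
    ∑ p ∈ arborescences S r with p m = w, ∏ j ∈ S, x (p j) =
      x w * ∑ p' ∈ arborescences (S.erase m) r,
        ∏ j ∈ S.erase m, (x + Pi.single w (x m) : V → R) (p' j) := by
  rw [sum_arborescences_filter_apply_eq _ hr hm hw, sum_sigma, mul_sum]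
  refine sum_congr rfl fun p' _ => ?_
  have hweight : ∀ j, (x + Pi.single w (x m) : V → R) (p' j) =
      x (p' j) + if p' j = w then x m else 0 := by
    simp [Pi.single_apply]
  rw [prod_congr rfl fun j _ => hweight j, prod_add_ite_eq_sum_powerset, mul_sum]
  exact sum_congr rfl fun U hU =>
    prod_expandEdge x hm ((mem_powerset.1 hU).trans (filter_subset _ _))

lemma sum_prod_arborescences_eq_sum_erase {R : Type*} [CommSemiring R] (x : V → R)
    (hr : r ∉ S) (hm : m ∈ S) :
    ∑ p ∈ arborescences S r, ∏ j ∈ S, x (p j) =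
      ∑ w ∈ insert r (S.erase m), x w * ∑ p' ∈ arborescences (S.erase m) r,
        ∏ j ∈ S.erase m, (x + Pi.single w (x m) : V → R) (p' j) := by
  rw [← sum_fiberwise_of_maps_to fun p hp =>
    (mem_arborescences.1 hp).apply_mem_insert_erase hm]
  exact sum_congr rfl fun w hw => sum_prod_arborescences_filter_apply_eq x hr hm hw

theorem sum_prod_arborescences {R : Type*} [CommSemiring R] (x : V → R) (hS : S.Nonempty)
    (hr : r ∉ S) :
    ∑ p ∈ arborescences S r, ∏ j ∈ S, x (p j) = x r * (∑ j ∈ insert r S, x j) ^ (#S - 1) := by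
  induction hS using Finset.Nonempty.cons_induction generalizing x with
  | singleton m =>
    rw [sum_prod_arborescences_eq_sum_erase x hr (mem_singleton_self m)]
    simp [arborescences_empty]
  | cons m S hmS hS ih =>
    have hr' : r ∉ S := fun h => hr (mem_cons_of_mem h)
    have hmr : m ∉ insert r S := by
      simp only [mem_insert, not_or]
      exact ⟨fun h => hr (h ▸ mem_cons_self m S), hmS⟩
    rw [sum_prod_arborescences_eq_sum_erase x hr (mem_cons_self m S), erase_cons]
    simp_rw [ih _ hr', Pi.add_apply, sum_add_distrib, sum_pi_single', Pi.single_apply]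
    have hcard : #(cons m S hmS) - 1 = #S - 1 + 1 := by
      rw [card_cons]; have := hS.card_pos; omega
    have htotal : ∑ j ∈ insert r (cons m S hmS), x j = ∑ j ∈ insert r S, x j + x m := by
      rw [cons_eq_insert, insert_comm, sum_insert hmr, add_comm]
    rw [hcard, htotal, pow_succ]
    set T := ∑ j ∈ insert r S, x j + x m
    calc ∑ w ∈ insert r S, x w * ((x r + if r = w then x m else 0) *
          (∑ j ∈ insert r S, x j + if w ∈ insert r S then x m else 0) ^ (#S - 1))
        = ∑ w ∈ insert r S, (x r * x w + if r = w then x r * x m else 0) * T ^ (#S - 1) :=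
          sum_congr rfl fun w hw => by
            rw [if_pos hw]
            split_ifs with hrw
            · subst hrw; ring
            · ring
      _ = x r * (T ^ (#S - 1) * T) := by
          rw [← sum_mul, sum_add_distrib, ← mul_sum, sum_ite_eq, if_pos (mem_insert_self r S)]
          ring

lemma isArborescence_univ_erase :
    IsArborescence (univ.erase r) r p ↔ p r = r ∧ ∃ h : V → ℕ, ∀ j ≠ r, h (p j) < h j := by
  simp [IsArborescence]

namespace IsArborescence

variable (hp : IsArborescence (univ.erase r) r p)
include hp

lemma parentGraph_connected : (parentGraph p).Connected := by
  obtain ⟨hpr, h, hh⟩ := isArborescence_univ_erase.1 hp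
  refine (connected_iff_exists_forall_reachable _).2 ⟨r, fun v => ?_⟩
  refine (measure h).wf.induction v (C := fun v => (parentGraph p).Reachable r v) fun v ih => ?_
  rcases eq_or_ne v r with rfl | hvr
  · rfl
  · have hadj : (parentGraph p).Adj (p v) v :=
      parentGraph_adj.2 ⟨fun hfix => (hh v hvr).ne (by rw [hfix]), Or.inr rfl⟩
    exact (ih (p v) (hh v hvr)).trans hadj.reachable

lemma edgeFinset_parentGraph [Fintype (parentGraph p).edgeSet] :
    (parentGraph p).edgeFinset = (univ.erase r).image fun j => s(j, p j) := by
  obtain ⟨hpr, -⟩ := isArborescence_univ_erase.1 hp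
  ext e
  induction e using Sym2.ind with | _ a b => ?_
  simp only [mem_edgeFinset, mem_edgeSet, parentGraph_adj, mem_image, mem_erase, mem_univ,
    and_true]
  constructor
  · rintro ⟨hab, rfl | rfl⟩
    · exact ⟨a, fun har => hab (by rw [har, hpr]), rfl⟩
    · exact ⟨b, fun hbr => hab (by rw [hbr, hpr]), Sym2.eq_swap⟩
  · rintro ⟨j, hjr, hj⟩
    have hpj : p j ≠ j := hp.apply_ne_self (mem_erase.2 ⟨hjr, mem_univ j⟩)
    rcases Sym2.eq_iff.1 hj with ⟨rfl, rfl⟩ | ⟨rfl, rfl⟩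
    · exact ⟨hpj.symm, Or.inl rfl⟩
    · exact ⟨hpj, Or.inr rfl⟩

lemma parentGraph_isTree : (parentGraph p).IsTree := by
  classical
  have : Nonempty V := ⟨r⟩
  refine isTree_iff_connected_and_card.2 ⟨hp.parentGraph_connected, ?_⟩
  rw [Nat.card_eq_fintype_card, ← edgeFinset_card, hp.edgeFinset_parentGraph,
    card_image_of_injOn (hp.injOn_sym2_mk (notMem_erase r univ)),
    card_erase_of_mem (mem_univ r), Nat.card_eq_fintype_card, card_univ,
    Nat.sub_add_cancel Fintype.card_pos]

lemma prod_pow_degree_parentGraph {R : Type*} [CommMonoid R] [DecidableRel (parentGraph p).Adj]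
    (x : V → R) : ∏ v, x v ^ (parentGraph p).degree v = ∏ j ∈ univ.erase r, x j * x (p j) := by
  rw [prod_pow_degree, hp.edgeFinset_parentGraph,
    prod_image (hp.injOn_sym2_mk (notMem_erase r univ))]
  refine prod_congr rfl fun j hj => ?_
  rw [Sym2.toFinset_mk_eq, prod_pair (hp.apply_ne_self hj).symm]

end IsArborescence

lemma parentGraph_injOn :
    Set.InjOn parentGraph {p : V → V | IsArborescence (univ.erase r) r p} := by
  intro p hp q hq hpq
  obtain ⟨hpr, h, hh⟩ := isArborescence_univ_erase.1 hp
  obtain ⟨hqr, -⟩ := isArborescence_univ_erase.1 hq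
  funext v
  refine (measure h).wf.induction v (C := fun v => p v = q v) fun v ih => ?_
  rcases eq_or_ne v r with rfl | hvr
  · rw [hpr, hqr]
  have hadj : (parentGraph q).Adj v (p v) := by
    rw [← hpq]
    exact parentGraph_adj.2 ⟨fun hfix => (hh v hvr).ne (by rw [← hfix]), Or.inl rfl⟩
  rcases (parentGraph_adj.1 hadj).2 with hqv | hqpv
  · exact hqv.symm
  · rw [← ih (p v) (hh v hvr)] at hqpv
    exact absurd hqpv (hp.apply_apply_ne (notMem_erase r univ) (mem_erase.2 ⟨hvr, mem_univ v⟩))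

lemma SimpleGraph.Connected.exists_isArborescence_parentGraph_le {G : SimpleGraph V}
    (hG : G.Connected) (r : V) : ∃ p, IsArborescence (univ.erase r) r p ∧ parentGraph p ≤ G := by
  have hstep : ∀ v ≠ r, ∃ u, G.Adj v u ∧ G.dist u r < G.dist v r := by
    intro v hvr
    obtain ⟨w, hw⟩ := hG.exists_walk_length_eq_dist v r
    cases w with
    | nil => exact absurd rfl hvr
    | cons hadj w' =>
      refine ⟨_, hadj, ?_⟩
      have := dist_le w'
      simp only [Walk.length_cons] at hw
      omega
  choose! q hqadj hqdist using hstep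
  classical
  refine ⟨fun v => if v = r then r else q v, isArborescence_univ_erase.2
    ⟨if_pos rfl, fun v => G.dist v r, fun j hj => by simpa [hj] using hqdist j hj⟩, ?_⟩
  intro a b hab
  obtain ⟨hne, hab | hba⟩ := parentGraph_adj.1 hab
  · have har : a ≠ r := fun har => hne (by rw [← hab, if_pos har, har])
    rw [if_neg har] at hab
    exact hab ▸ hqadj a har
  · have hbr : b ≠ r := fun hbr => hne (by rw [← hba, if_pos hbr, hbr])
    rw [if_neg hbr] at hba
    exact (hba ▸ hqadj b hbr).symm

lemma SimpleGraph.IsTree.exists_isArborescence_parentGraph_eq {T : SimpleGraph V}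
    (hT : T.IsTree) (r : V) : ∃ p, IsArborescence (univ.erase r) r p ∧ parentGraph p = T := by
  obtain ⟨p, hp, hle⟩ := hT.connected.exists_isArborescence_parentGraph_le r
  have := hT.connected.nonempty
  exact ⟨p, hp, le_antisymm hle
    ((maximal_isAcyclic_iff_isTree.2 hp.parentGraph_isTree).2 hT.isAcyclic hle)⟩

open scoped Classical in
lemma sum_isTree_eq_sum_arborescences {M : Type*} [AddCommMonoid M] (f : SimpleGraph V → M)
    (r : V) :
    ∑ T : {T : SimpleGraph V // T.Connected ∧ T.IsAcyclic}, f T.1 =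
      ∑ p ∈ arborescences (univ.erase r) r, f (parentGraph p) := by
  symm
  refine sum_bij (fun p hp => ⟨parentGraph p,
      (mem_arborescences.1 hp).parentGraph_isTree.connected,
      (mem_arborescences.1 hp).parentGraph_isTree.isAcyclic⟩)
    (fun _ _ => mem_univ _)
    (fun p hp q hq hpq => parentGraph_injOn (mem_arborescences.1 hp) (mem_arborescences.1 hq)
      (congrArg Subtype.val hpq))
    (fun T _ => ?_) (fun _ _ => rfl)
  obtain ⟨p, hp, hpT⟩ := (IsTree.mk T.2.1 T.2.2).exists_isArborescence_parentGraph_eq r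
  exact ⟨p, mem_arborescences.2 hp, Subtype.ext hpT⟩

open scoped Classical in
theorem sum_isTree_prod_pow_degree {R : Type*} [CommSemiring R] (x : V → R)
    (hV : 2 ≤ Fintype.card V) :
    ∑ T : {T : SimpleGraph V // T.Connected ∧ T.IsAcyclic}, ∏ i, x i ^ T.1.degree i =
      (∏ i, x i) * (∑ i, x i) ^ (Fintype.card V - 2) := by
  obtain ⟨r⟩ : Nonempty V := Fintype.card_pos_iff.1 (by omega)
  have hS : (univ.erase r).Nonempty := by
    rw [← card_pos, card_erase_of_mem (mem_univ r), card_univ]; omega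
  have hcard : #(univ.erase r) - 1 = Fintype.card V - 2 := by
    rw [card_erase_of_mem (mem_univ r), card_univ]; omega
  calc _ = ∑ p ∈ arborescences (univ.erase r) r, ∏ i, x i ^ (parentGraph p).degree i :=
        sum_isTree_eq_sum_arborescences (fun T => ∏ i, x i ^ T.degree i) r
    _ = ∑ p ∈ arborescences (univ.erase r) r, ∏ j ∈ univ.erase r, x j * x (p j) :=
        sum_congr rfl fun p hp => (mem_arborescences.1 hp).prod_pow_degree_parentGraph x
    _ = (∏ j ∈ univ.erase r, x j) * (x r * (∑ i, x i) ^ (Fintype.card V - 2)) := by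
        simp_rw [prod_mul_distrib]
        rw [← mul_sum, sum_prod_arborescences x hS (notMem_erase r univ),
          insert_erase (mem_univ r), hcard]
    _ = _ := by
        rw [← mul_prod_erase univ x (mem_univ r)]
        ring

open scoped Classical in
/-- The Cayley–Kirchhoff degree generating function identity:
`∑_{T spanning tree of K_n} ∏ᵢ xᵢ^{deg_T(i)} = x₁⋯xₙ (x₁+⋯+xₙ)^{n-2}`. -/
theorem cayley_degree_identity (n : ℕ) (hn : 2 ≤ n) (x : Fin n → ℝ) :
    ∑ T : {T : SimpleGraph (Fin n) // T.Connected ∧ T.IsAcyclic},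
        ∏ i : Fin n, x i ^ (T.1.degree i) =
      (∏ i : Fin n, x i) * (∑ i : Fin n, x i) ^ (n - 2) := by
  simpa using sum_isTree_prod_pow_degree x (by simpa using hn)
end

section
/- For any c ≥ 1 and n ≥ 2, the number of spanning trees of K_n in which some vertex has degree at least n/(2c) is at most 2^n · n^{n − n/(2c)}. -/
/-!
Root a tree at `r` and send every vertex to its neighbour on the path towards `r` (and `r` to
itself). This parent map determines the tree, and its fibre over `r` contains `r` together with
all neighbours of `r`. Hence trees in which `r` has degree at least `d` inject into maps
`V → V` that are constant equal to `r` on some `(d + 1)`-set, of which there are at most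
`C(n, d + 1) n^(n - d - 1)`. Summing over `r` gives `n C(n, d + 1) n^(n - d - 1) ≤ 2^n n^(n - d)`,
and we take `d = ⌈n / (2c)⌉`.
-/

open SimpleGraph Finset

namespace SimpleGraph.IsTree

variable {V : Type*} {G H : SimpleGraph V}

noncomputable def parent (hG : G.IsTree) (r u : V) : V :=
  (hG.existsUnique_path u r).choose.snd

lemma parent_eq_snd (hG : G.IsTree) {r u : V} {p : G.Walk u r} (hp : p.IsPath) :
    hG.parent r u = p.snd := by
  rw [parent, (hG.existsUnique_path u r).unique (hG.existsUnique_path u r).choose_spec.1 hp]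

lemma parent_root (hG : G.IsTree) (r : V) : hG.parent r r = r :=
  hG.parent_eq_snd Walk.IsPath.nil

lemma parent_eq_of_adj (hG : G.IsTree) {r u : V} (h : G.Adj u r) : hG.parent r u = r := by
  rw [hG.parent_eq_snd (p := .cons h .nil) (by simp [h.ne]), Walk.snd_cons]

lemma adj_parent (hG : G.IsTree) {r u : V} (h : u ≠ r) : G.Adj u (hG.parent r u) := by
  obtain ⟨p, hp, -⟩ := hG.existsUnique_path u r
  rw [hG.parent_eq_snd hp]
  exact p.adj_snd (Walk.not_nil_of_ne h)

lemma adj_iff_parent (hG : G.IsTree) (r a b : V) :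
    G.Adj a b ↔ (a ≠ r ∧ hG.parent r a = b) ∨ (b ≠ r ∧ hG.parent r b = a) := by
  refine ⟨fun hab => ?_, ?_⟩
  · obtain ⟨p, hp, -⟩ := hG.existsUnique_path a r
    by_cases hb : b ∈ p.support
    · refine Or.inl ⟨?_, ?_⟩
      · rintro rfl
        rw [Walk.nil_iff_support_eq.mp (Walk.isPath_iff_nil.mp hp), List.mem_singleton] at hb
        exact hab.ne hb.symm
      · rw [hG.parent_eq_snd hp, ← hG.isAcyclic.eq_snd_of_adj_start hp hab hb]
    · refine Or.inr ⟨fun h => hb (h ▸ p.end_mem_support), ?_⟩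
      rw [hG.parent_eq_snd (hp.cons hb (h := hab.symm)), Walk.snd_cons]
  · rintro (⟨ha, rfl⟩ | ⟨hb, rfl⟩)
    · exact hG.adj_parent ha
    · exact (hG.adj_parent hb).symm

lemma eq_of_parent_eq (hG : G.IsTree) (hH : H.IsTree) {r : V}
    (h : hG.parent r = hH.parent r) : G = H := by
  ext a b
  rw [hG.adj_iff_parent r, hH.adj_iff_parent r, h]

lemma degree_add_one_le_card_parent_eq [Fintype V] [DecidableEq V] (hG : G.IsTree) (r : V)
    [Fintype (G.neighborSet r)] : G.degree r + 1 ≤ #{u | hG.parent r u = r} := by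
  rw [← card_neighborFinset_eq_degree,
    ← card_insert_of_notMem (s := G.neighborFinset r) (a := r) (by simp)]
  refine card_le_card fun u hu => ?_
  rw [mem_insert, mem_neighborFinset] at hu
  rw [mem_filter]
  rcases hu with rfl | hadj
  · exact ⟨mem_univ _, hG.parent_root _⟩
  · exact ⟨mem_univ _, hG.parent_eq_of_adj hadj.symm⟩

end SimpleGraph.IsTree

section FunctionsWithLargeFiber

variable {α β : Type*} [Fintype α] [DecidableEq α] [Fintype β] [DecidableEq β]

lemma card_filter_forall_mem_eq (S : Finset α) (b : β) :
    #{f : α → β | ∀ a ∈ S, f a = b} = Fintype.card β ^ (Fintype.card α - #S) := by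
  have hpi : ({f : α → β | ∀ a ∈ S, f a = b} : Finset (α → β)) =
      Fintype.piFinset fun a => if a ∈ S then {b} else univ := by
    ext f
    simp only [mem_filter, mem_univ, true_and, Fintype.mem_piFinset]
    refine forall_congr' fun a => ?_
    split_ifs with ha <;> simp [ha]
  rw [hpi, Fintype.card_piFinset]
  simp only [apply_ite card, card_singleton, card_univ]
  rw [prod_ite, prod_const_one, one_mul, prod_const]
  simp [filter_notMem_eq_sdiff, card_sdiff]

lemma card_filter_le_card_fiber_le (b : β) (k : ℕ) :
    #{f : α → β | k ≤ #{a | f a = b}} ≤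
      (Fintype.card α).choose k * Fintype.card β ^ (Fintype.card α - k) := by
  have hcover : ({f : α → β | k ≤ #{a | f a = b}} : Finset (α → β)) ⊆
      (powersetCard k univ).biUnion fun S => {f | ∀ a ∈ S, f a = b} := by
    intro f hf
    obtain ⟨S, hS, hSk⟩ := exists_subset_card_eq (mem_filter.mp hf).2
    simp only [mem_biUnion, mem_powersetCard, mem_filter, mem_univ, true_and]
    exact ⟨S, ⟨subset_univ S, hSk⟩, fun a ha => (mem_filter.mp (hS ha)).2⟩
  calc _ ≤ _ := card_le_card hcover
    _ ≤ ∑ S ∈ powersetCard k univ, #{f : α → β | ∀ a ∈ S, f a = b} := card_biUnion_le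
    _ = _ := by
      rw [sum_congr rfl fun S hS => by rw [card_filter_forall_mem_eq, (mem_powersetCard.mp hS).2],
        sum_const, card_powersetCard, card_univ, smul_eq_mul]

end FunctionsWithLargeFiber

section TreeCount

variable (V : Type*) [Fintype V] [DecidableEq V]

open Classical in
lemma card_isTree_le_degree_le (r : V) (d : ℕ) :
    Fintype.card {T : SimpleGraph V // T.IsTree ∧ d ≤ T.degree r} ≤
      (Fintype.card V).choose (d + 1) * Fintype.card V ^ (Fintype.card V - (d + 1)) := by
  calc _ ≤ Fintype.card {f : V → V // d + 1 ≤ #{u | f u = r}} :=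
        Fintype.card_le_of_injective
          (fun T => ⟨T.2.1.parent r,
            (Nat.add_le_add_right T.2.2 1).trans (T.2.1.degree_add_one_le_card_parent_eq r)⟩)
          fun T₁ T₂ h =>
            Subtype.ext (T₁.2.1.eq_of_parent_eq T₂.2.1 (congrArg Subtype.val h))
    _ = #{f : V → V | d + 1 ≤ #{u | f u = r}} := Fintype.card_subtype _
    _ ≤ _ := card_filter_le_card_fiber_le r (d + 1)

open Classical in
theorem card_isTree_exists_le_degree_le (d : ℕ) :
    Nat.card {T : SimpleGraph V // T.IsTree ∧ ∃ v, d ≤ T.degree v} ≤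
      Fintype.card V *
        ((Fintype.card V).choose (d + 1) * Fintype.card V ^ (Fintype.card V - (d + 1))) := by
  have hcover : ({T | T.IsTree ∧ ∃ v, d ≤ T.degree v} : Finset (SimpleGraph V)) ⊆
      univ.biUnion fun v => {T | T.IsTree ∧ d ≤ T.degree v} := by
    intro T hT
    simp only [mem_filter, mem_univ, true_and, mem_biUnion] at hT ⊢
    obtain ⟨hT, v, hv⟩ := hT
    exact ⟨v, hT, hv⟩
  rw [Nat.card_eq_fintype_card, Fintype.card_subtype, ← card_univ (α := V)]
  refine (card_le_card hcover).trans (card_biUnion_le_card_mul _ _ _ fun v _ => ?_)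
  rw [← Fintype.card_subtype]
  exact card_isTree_le_degree_le V v d

end TreeCount

lemma mul_choose_mul_pow_le {n d : ℕ} (h : d < n) :
    n * (n.choose (d + 1) * n ^ (n - (d + 1))) ≤ 2 ^ n * n ^ (n - d) :=
  calc _ = n.choose (d + 1) * n ^ (n - d) := by
        rw [show n - d = n - (d + 1) + 1 by omega, pow_succ]; ring
    _ ≤ _ := Nat.mul_le_mul_right _ (Nat.choose_le_two_pow n _)

open scoped Classical in
theorem count_star_like_trees_general (n : ℕ) (c : ℝ) :
    (Nat.card {T : SimpleGraph (Fin n) //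
        T.Connected ∧ T.IsAcyclic ∧ ∃ v : Fin n, (n : ℝ) / (2 * c) ≤ T.degree v} : ℝ)
      ≤ 2 ^ n * (n : ℝ) ^ ((n : ℝ) - n / (2 * c)) := by
  set d := ⌈(n : ℝ) / (2 * c)⌉₊
  have hcount : Nat.card {T : SimpleGraph (Fin n) //
      T.Connected ∧ T.IsAcyclic ∧ ∃ v : Fin n, (n : ℝ) / (2 * c) ≤ T.degree v} ≤
      n * (n.choose (d + 1) * n ^ (n - (d + 1))) := by
    rw [Nat.card_congr (Equiv.subtypeEquivRight (q := fun T => T.IsTree ∧ ∃ v, d ≤ T.degree v)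
        fun T => by simp only [isTree_iff, and_assoc, d, Nat.ceil_le])]
    simpa only [Fintype.card_fin] using card_isTree_exists_le_degree_le (Fin n) d
  rcases lt_or_ge d n with hdn | hnd
  · calc (Nat.card _ : ℝ) ≤ ((2 ^ n * n ^ (n - d) : ℕ) : ℝ) := by
          exact_mod_cast hcount.trans (mul_choose_mul_pow_le hdn)
      _ = 2 ^ n * (n : ℝ) ^ ((n : ℝ) - d) := by
          push_cast
          rw [← Real.rpow_natCast _ (n - d), Nat.cast_sub hdn.le]
      _ ≤ _ := by
          gcongr
          · exact_mod_cast (by omega : 1 ≤ n)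
          · exact Nat.le_ceil _
  · rw [Nat.choose_eq_zero_of_lt (by omega), zero_mul, mul_zero, Nat.le_zero] at hcount
    rw [hcount, Nat.cast_zero]
    positivity

open scoped Classical in
/-- For `c ≥ 1`, the number of spanning trees of `K_n` in which some vertex has degree
at least `n/(2c)` is at most `2^n · n^(n - n/(2c))`. -/
theorem count_star_like_trees (n : ℕ) (hn : 2 ≤ n) (c : ℝ) (hc : 1 ≤ c) :
    (Nat.card {T : SimpleGraph (Fin n) //
        T.Connected ∧ T.IsAcyclic ∧ ∃ v : Fin n, (n : ℝ) / (2 * c) ≤ T.degree v} : ℝ)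
      ≤ 2 ^ n * (n : ℝ) ^ ((n : ℝ) - n / (2 * c)) :=
  count_star_like_trees_general n c
end

section
/- For n ≥ 1000 and t ≤ n/100: if F is a union of t pairwise vertex-disjoint edges in K_n and T_0 is a forest in K_n such that no edge of T_0 is adjacent to more than n/12 other edges of T_0 (T_0 is not 12-star-like), then the number of spanning trees of K_n that contain F and contain no edge of T_0 \ F is at least 0.01 times the number of spanning trees of K_n containing F. -/
/-!
The bound comes from a switching argument. Let `A(P)` count the spanning trees that contain `F` and avoid a
set `P` of edges of `T₀ \ F`, and let `uv` be a further such edge. From a tree using `uv` and a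
vertex `w` with `uw, vw ∉ P`, delete `uv` and join `w` to whichever of `u`, `v` lies in the other
component: the result is a tree avoiding `P ∪ {uv}`, and each such tree arises from at most two
pairs, one per endpoint. As `T₀` is not star-like, `u` and `v` have few `T₀`-neighbours, so there are at least
`2n/3` such `w`, whence `A(P) ≤ (1 + 3/n) A(P ∪ {uv})`. The forest `T₀` has fewer than `n` edges,
so removing them one at a time loses a factor at most `(1 + 3/n)^n ≤ e³ < 100`.
-/

open SimpleGraph Finset

namespace SimpleGraph

variable {V : Type*} {G T T₁ T₂ : SimpleGraph V} {u v w w₁ w₂ : V}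

theorem Preconnected.reachable_deleteEdges_or (hG : G.Preconnected) (u v w : V) :
    (G.deleteEdges {s(u, v)}).Reachable u w ∨ (G.deleteEdges {s(u, v)}).Reachable v w := by
  classical
  obtain ⟨p, hp⟩ := (hG w u).exists_isPath
  by_cases hep : s(u, v) ∈ p.edges
  · have hv := p.snd_mem_support_of_mem_edges hep
    have huv : v ≠ u := (G.ne_of_adj (p.adj_of_mem_edges hep)).symm
    have hu : u ∉ (p.takeUntil v hv).support :=
      Walk.endpoint_notMem_support_takeUntil hp hv huv.symm
    refine .inr ⟨((p.takeUntil v hv).toDeleteEdges {s(u, v)} ?_).reverse⟩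
    simp only [Set.mem_singleton_iff]
    exact fun e he hee => hu ((p.takeUntil v hv).fst_mem_support_of_mem_edges (hee ▸ he))
  · refine .inl ⟨(p.toDeleteEdges {s(u, v)} ?_).reverse⟩
    simp only [Set.mem_singleton_iff]
    exact fun e he hee => hep (hee ▸ he)

theorem IsTree.sup_edge_deleteEdges (hT : T.IsTree)
    (hw : ¬(T.deleteEdges {s(u, v)}).Reachable u w) :
    (T.deleteEdges {s(u, v)} ⊔ edge u w).IsTree := by
  set H := T.deleteEdges {s(u, v)}
  have hvw : H.Reachable v w :=
    (hT.connected.preconnected.reachable_deleteEdges_or u v w).resolve_left hw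
  have huw : (H ⊔ edge u w).Adj u w :=
    Or.inr ((edge_adj ..).mpr ⟨.inl ⟨rfl, rfl⟩, fun h => hw (h ▸ .refl u)⟩)
  refine ⟨(connected_iff_exists_forall_reachable _).mpr ⟨u, fun x => ?_⟩,
    (hT.isAcyclic.anti (deleteEdges_le _)).sup_edge_of_not_reachable hw⟩
  rcases hT.connected.preconnected.reachable_deleteEdges_or u v x with hx | hx
  · exact hx.mono le_sup_left
  · exact huw.reachable.trans ((hvw.symm.trans hx).mono le_sup_left)

theorem deleteEdges_sup_edge_of_adj_s19 (h : G.Adj u v) : G.deleteEdges {s(u, v)} ⊔ edge u v = G := by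
  ext x y
  simp only [sup_adj, deleteEdges_adj, edge_adj, Set.mem_singleton_iff]
  constructor
  · rintro (⟨hxy, -⟩ | ⟨⟨rfl, rfl⟩ | ⟨rfl, rfl⟩, -⟩)
    exacts [hxy, h, h.symm]
  · intro hxy
    by_cases he : s(x, y) = s(u, v)
    · exact .inr ⟨by simpa [Sym2.eq_iff] using he, hxy.ne⟩
    · exact .inl ⟨hxy, he⟩

theorem sup_edge_deleteEdges_of_not_adj_s19 (h : ¬G.Adj u w) :
    (G ⊔ edge u w).deleteEdges {s(u, w)} = G := by
  simp [deleteEdges_sup, h]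

theorem IsAcyclic.not_reachable_deleteEdges_s19 (hG : G.IsAcyclic) (h : G.Adj u v) :
    ¬(G.deleteEdges {s(u, v)}).Reachable u v :=
  isBridge_iff.mp (isAcyclic_iff_forall_adj_isBridge.mp hG h)

theorem IsTree.eq_of_sup_edge_deleteEdges_eq (hT₁ : T₁.IsTree) (hT₂ : T₂.IsTree)
    (huv₁ : T₁.Adj u v) (huv₂ : T₂.Adj u v)
    (hw₁ : ¬(T₁.deleteEdges {s(u, v)}).Reachable u w₁)
    (hw₂ : ¬(T₂.deleteEdges {s(u, v)}).Reachable u w₂)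
    (h : T₁.deleteEdges {s(u, v)} ⊔ edge u w₁ = T₂.deleteEdges {s(u, v)} ⊔ edge u w₂) :
    T₁ = T₂ ∧ w₁ = w₂ := by
  set T' := T₁.deleteEdges {s(u, v)} ⊔ edge u w₁
  have hdel₁ : T'.deleteEdges {s(u, w₁)} = T₁.deleteEdges {s(u, v)} :=
    sup_edge_deleteEdges_of_not_adj_s19 fun h => hw₁ h.reachable
  have hdel₂ : T'.deleteEdges {s(u, w₂)} = T₂.deleteEdges {s(u, v)} :=
    h ▸ sup_edge_deleteEdges_of_not_adj_s19 fun h => hw₂ h.reachable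
  obtain ⟨p, hp⟩ := ((hT₁.sup_edge_deleteEdges hw₁).connected.preconnected u v).exists_isPath
  -- each `uwᵢ` separates `u` from `v` in the tree `T'`, so it is the first edge of its `u`-`v` path
  have hw₁p : w₁ = p.snd := hp.eq_snd_of_mem_edges <|
    p.mem_edges_of_not_reachable_deleteEdges <| by
      rw [hdel₁]; exact hT₁.isAcyclic.not_reachable_deleteEdges_s19 huv₁
  have hw₂p : w₂ = p.snd := hp.eq_snd_of_mem_edges <|
    p.mem_edges_of_not_reachable_deleteEdges <| by
      rw [hdel₂]; exact hT₂.isAcyclic.not_reachable_deleteEdges_s19 huv₂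
  refine ⟨?_, hw₁p.trans hw₂p.symm⟩
  rw [← deleteEdges_sup_edge_of_adj_s19 huv₁, ← deleteEdges_sup_edge_of_adj_s19 huv₂, ← hdel₁, ← hdel₂,
    hw₁p, hw₂p]

theorem IsAcyclic.not_reachable_deleteEdges_of_reachable (hG : G.IsAcyclic) (h : G.Adj u v)
    (hw : (G.deleteEdges {s(u, v)}).Reachable u w) : ¬(G.deleteEdges {s(v, u)}).Reachable v w :=
  fun hw' => hG.not_reachable_deleteEdges_s19 h (hw.trans (Sym2.eq_swap ▸ hw').symm)

section Counting

open scoped Classical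

variable [Fintype V] [DecidableEq V] {F : SimpleGraph V} {P : Finset (Sym2 V)}

noncomputable def treesAvoiding (F : SimpleGraph V) (P : Finset (Sym2 V)) :
    Finset (SimpleGraph V) :=
  {T | F ≤ T ∧ T.IsTree ∧ ∀ e ∈ P, e ∉ T.edgeSet}

theorem mem_treesAvoiding :
    T ∈ treesAvoiding F P ↔ F ≤ T ∧ T.IsTree ∧ ∀ e ∈ P, e ∉ T.edgeSet := by
  simp [treesAvoiding]

noncomputable def switchCandidates (P : Finset (Sym2 V)) (u v : V) : Finset V :=
  {w | w ≠ u ∧ w ≠ v ∧ s(u, w) ∉ P ∧ s(v, w) ∉ P}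

theorem sup_edge_deleteEdges_mem_treesAvoiding (hT : T ∈ treesAvoiding F P)
    (hF : s(u, v) ∉ F.edgeSet) (hw : ¬(T.deleteEdges {s(u, v)}).Reachable u w) (hwv : w ≠ v)
    (hwP : s(u, w) ∉ P) :
    T.deleteEdges {s(u, v)} ⊔ edge u w ∈ treesAvoiding F (insert s(u, v) P) := by
  obtain ⟨hFT, hT, hTP⟩ := mem_treesAvoiding.mp hT
  have hnew : s(u, w) ≠ s(u, v) := fun h => hwv (Sym2.congr_right.mp h)
  refine mem_treesAvoiding.mpr ⟨fun x y hxy => Or.inl ?_, hT.sup_edge_deleteEdges hw, ?_⟩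
  · exact deleteEdges_adj.mpr ⟨hFT hxy, fun h => hF ((Set.mem_singleton_iff.mp h) ▸ hxy)⟩
  · intro e he
    simp only [edgeSet_sup, edgeSet_deleteEdges, edgeSet_edge, Set.mem_union, Set.mem_sdiff,
      Set.mem_singleton_iff, not_or, not_and, not_not]
    rcases mem_insert.mp he with rfl | heP
    · exact ⟨fun _ => rfl, fun h => absurd h.symm hnew⟩
    · exact ⟨fun h => absurd h (hTP e heP), fun h => absurd (h ▸ heP) hwP⟩

theorem card_filter_adj_mul_card_switchCandidates_le (hF : s(u, v) ∉ F.edgeSet) :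
    #{T ∈ treesAvoiding F P | T.Adj u v} * #(switchCandidates P u v) ≤
      2 * #(treesAvoiding F (insert s(u, v) P)) := by
  have hvu : s(v, u) = s(u, v) := Sym2.eq_swap
  let f : SimpleGraph V × V → SimpleGraph V × Bool := fun p =>
    if (p.1.deleteEdges {s(u, v)}).Reachable u p.2 then
      (p.1.deleteEdges {s(v, u)} ⊔ edge v p.2, true)
    else (p.1.deleteEdges {s(u, v)} ⊔ edge u p.2, false)
  rw [← card_product, mul_comm, ← Fintype.card_bool, ← card_univ, ← card_product]
  refine card_le_card_of_injOn f ?_ ?_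
  · rintro ⟨T, w⟩ hTw
    simp only [coe_product, Set.mem_prod, mem_coe, mem_filter, switchCandidates, mem_univ,
      true_and] at hTw
    obtain ⟨⟨hT, huv⟩, hwu, hwv, huw, hvw⟩ := hTw
    simp only [f, coe_product, Set.mem_prod, mem_coe, mem_univ, and_true]
    split_ifs with hw
    · rw [← hvu] at hF ⊢
      have hvw' := (mem_treesAvoiding.mp hT).2.1.isAcyclic.not_reachable_deleteEdges_of_reachable
        huv hw
      exact sup_edge_deleteEdges_mem_treesAvoiding hT hF hvw' hwu hvw
    · exact sup_edge_deleteEdges_mem_treesAvoiding hT hF hw hwv huw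
  · rintro ⟨T₁, w₁⟩ h₁ ⟨T₂, w₂⟩ h₂ h
    simp only [coe_product, Set.mem_prod, mem_coe, mem_filter, mem_treesAvoiding] at h₁ h₂
    obtain ⟨⟨⟨-, hT₁, -⟩, huv₁⟩, -⟩ := h₁
    obtain ⟨⟨⟨-, hT₂, -⟩, huv₂⟩, -⟩ := h₂
    simp only [f] at h
    split_ifs at h with hw₁ hw₂ hw₂ <;> simp only [Prod.mk.injEq, Bool.true_eq_false,
      Bool.false_eq_true, and_true, and_false] at h
    · obtain ⟨rfl, rfl⟩ := hT₁.eq_of_sup_edge_deleteEdges_eq hT₂ huv₁.symm huv₂.symm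
        (hT₁.isAcyclic.not_reachable_deleteEdges_of_reachable huv₁ hw₁)
        (hT₂.isAcyclic.not_reachable_deleteEdges_of_reachable huv₂ hw₂) h
      rfl
    · obtain ⟨rfl, rfl⟩ := hT₁.eq_of_sup_edge_deleteEdges_eq hT₂ huv₁ huv₂ hw₁ hw₂ h
      rfl

theorem card_treesAvoiding_eq_card_filter_adj_add (u v : V) :
    #(treesAvoiding F P) =
      #{T ∈ treesAvoiding F P | T.Adj u v} + #(treesAvoiding F (insert s(u, v) P)) := by
  rw [← card_filter_add_card_filter_not (fun T => T.Adj u v)]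
  congr 2
  ext T
  simp only [mem_filter, mem_treesAvoiding, forall_mem_insert, mem_edgeSet]
  tauto

theorem card_treesAvoiding_le_mul_card_insert {k : ℝ} (hk : 0 < k)
    (hkW : k ≤ #(switchCandidates P u v)) (hF : s(u, v) ∉ F.edgeSet) :
    (#(treesAvoiding F P) : ℝ) ≤ (1 + 2 / k) * #(treesAvoiding F (insert s(u, v) P)) := by
  have hswitch : (#{T ∈ treesAvoiding F P | T.Adj u v} : ℝ) * k ≤
      2 * #(treesAvoiding F (insert s(u, v) P)) :=
    (mul_le_mul_of_nonneg_left hkW (Nat.cast_nonneg _)).trans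
      (by exact_mod_cast card_filter_adj_mul_card_switchCandidates_le hF)
  have hX : (#{T ∈ treesAvoiding F P | T.Adj u v} : ℝ) ≤
      2 / k * #(treesAvoiding F (insert s(u, v) P)) := by
    rw [div_mul_eq_mul_div, le_div_iff₀ hk]
    exact hswitch
  rw [card_treesAvoiding_eq_card_filter_adj_add u v, Nat.cast_add]
  linarith

theorem card_le_card_switchCandidates_add {G : SimpleGraph V} [DecidableRel G.Adj]
    (hP : P ⊆ G.edgeFinset) (u v : V) :
    Fintype.card V ≤ #(switchCandidates P u v) + (G.degree u + 1) + (G.degree v + 1) := by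
  have hcover : (univ : Finset V) ⊆
      switchCandidates P u v ∪ insert u (G.neighborFinset u) ∪ insert v (G.neighborFinset v) := by
    intro w _
    have hadj : ∀ x, s(x, w) ∈ P → w ∈ G.neighborFinset x := fun x hx =>
      (mem_neighborFinset ..).mpr (mem_edgeFinset.mp (hP hx))
    by_cases hu : w = u; · simp [hu]
    by_cases hv : w = v; · simp [hv]
    by_cases huw : s(u, w) ∈ P; · simp [hadj u huw]
    by_cases hvw : s(v, w) ∈ P; · simp [hadj v hvw]
    simp [switchCandidates, hu, hv, huw, hvw]
  calc Fintype.card V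
      ≤ #(switchCandidates P u v ∪ insert u (G.neighborFinset u) ∪ insert v (G.neighborFinset v)) :=
        by simpa using card_le_card hcover
    _ ≤ #(switchCandidates P u v) + #(insert u (G.neighborFinset u)) +
          #(insert v (G.neighborFinset v)) :=
        (card_union_le _ _).trans (by gcongr; exact card_union_le _ _)
    _ ≤ _ := by
      gcongr <;> exact (card_insert_le _ _).trans_eq (by rw [card_neighborFinset_eq_degree])

theorem card_treesAvoiding_le_mul_card_insert_of_degree_le {G : SimpleGraph V}
    [DecidableRel G.Adj] (hP : P ⊆ G.edgeFinset) (hF : s(u, v) ∉ F.edgeSet)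
    (hdeg : (G.degree u + G.degree v + 2 : ℝ) ≤ Fintype.card V / 3) :
    (#(treesAvoiding F P) : ℝ) ≤
      (1 + 3 / Fintype.card V) * #(treesAvoiding F (insert s(u, v) P)) := by
  have hV : (0 : ℝ) < Fintype.card V := Fintype.card_pos_iff.mpr ⟨u⟩ |> Nat.cast_pos.mpr
  have hW : (2 * Fintype.card V / 3 : ℝ) ≤ #(switchCandidates P u v) := by
    have : (Fintype.card V : ℝ) ≤
        #(switchCandidates P u v) + (G.degree u + 1) + (G.degree v + 1) := by
      exact_mod_cast card_le_card_switchCandidates_add hP u v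
    linarith
  convert card_treesAvoiding_le_mul_card_insert (by positivity) hW hF using 3
  field_simp

theorem natCard_eq_card_treesAvoiding {p : SimpleGraph V → Prop}
    (hp : ∀ T, p T ↔ F ≤ T ∧ T.IsTree ∧ ∀ e ∈ P, e ∉ T.edgeSet) :
    Nat.card {T // p T} = #(treesAvoiding F P) := by
  rw [Nat.card_eq_fintype_card, Fintype.card_subtype]
  congr 1
  ext T
  simp [hp, mem_treesAvoiding]

end Counting

theorem IsAcyclic.card_edgeFinset_add_one_le [Fintype V] [Nonempty V] [Fintype G.edgeSet]
    (hG : G.IsAcyclic) : #G.edgeFinset + 1 ≤ Fintype.card V := by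
  classical
  obtain ⟨T, hGT, -, hT⟩ := connected_top.exists_isTree_le_of_le_of_isAcyclic le_top hG
  rw [← hT.card_edgeFinset]
  exact Nat.add_le_add_right (card_le_card (edgeFinset_subset_edgeFinset.mpr hGT)) 1

theorem degree_le_card_filter_adjacent_add_one [Fintype V] [DecidableEq V] [DecidableRel G.Adj]
    {e : Sym2 V} [DecidablePred fun f => f ≠ e ∧ ∃ y, y ∈ e ∧ y ∈ f] (he : e ∈ G.edgeFinset)
    {x : V} (hx : x ∈ e) :
    G.degree x ≤ #{f ∈ G.edgeFinset | f ≠ e ∧ ∃ y, y ∈ e ∧ y ∈ f} + 1 := by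
  have hsub :
      (G.incidenceFinset x).erase e ⊆ {f ∈ G.edgeFinset | f ≠ e ∧ ∃ y, y ∈ e ∧ y ∈ f} := by
    intro f hf
    obtain ⟨hfe, hfG, hxf⟩ := by simpa [mem_incidenceFinset, incidenceSet] using hf
    simpa using ⟨hfG, hfe, x, hx, hxf⟩
  have hxe : e ∈ G.incidenceFinset x := (mem_incidenceFinset ..).mpr ⟨mem_edgeFinset.mp he, hx⟩
  have := card_le_card hsub
  rw [card_erase_of_mem hxe, card_incidenceFinset_eq_degree] at this
  omega

end SimpleGraph

theorem Finset.le_pow_card_mul_of_le_mul_insert {α : Type*} [DecidableEq α] {f : Finset α → ℝ}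
    {q : ℝ} (hq : 0 ≤ q) (D : Finset α)
    (h : ∀ P ⊆ D, ∀ e ∈ D, e ∉ P → f P ≤ q * f (insert e P)) : f ∅ ≤ q ^ #D * f D := by
  suffices ∀ P ⊆ D, f ∅ ≤ q ^ #P * f P from this D subset_rfl
  intro P
  induction P using Finset.induction_on with
  | empty => simp
  | insert e P he ih =>
    intro hP
    calc f ∅ ≤ q ^ #P * f P := ih ((subset_insert e P).trans hP)
      _ ≤ q ^ #P * (q * f (insert e P)) :=
        mul_le_mul_of_nonneg_left
          (h P ((subset_insert e P).trans hP) e (hP (mem_insert_self e P)) he) (pow_nonneg hq _)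
      _ = q ^ #(insert e P) * f (insert e P) := by
        rw [card_insert_of_notMem he, pow_succ, mul_assoc]

theorem one_add_three_div_pow_le {n m : ℕ} (hm : m ≤ n) : (1 + 3 / n : ℝ) ^ m ≤ 100 := by
  calc (1 + 3 / n : ℝ) ^ m ≤ (1 + 3 / n) ^ n := pow_le_pow_right₀ (by simp; positivity) hm
    _ = (1 - (-3) / n) ^ n := by ring
    _ ≤ Real.exp 3 := by
      simpa using Real.one_sub_div_pow_le_exp_neg (n := n) (t := -3)
        (by linarith [(n.cast_nonneg : (0 : ℝ) ≤ n)])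
    _ = Real.exp 1 ^ 3 := by rw [← Real.exp_nat_mul]; norm_num
    _ ≤ 2.7182818286 ^ 3 := by gcongr; exact Real.exp_one_lt_d9.le
    _ ≤ 100 := by norm_num

open scoped Classical in
theorem count_trees_avoiding_non_star_like_general (n : ℕ) (hn : 1000 ≤ n)
    (F : SimpleGraph (Fin n))
    (T₀ : SimpleGraph (Fin n)) [DecidableRel T₀.Adj] (hT₀ : T₀.IsAcyclic)
    (hstar : ∀ e ∈ T₀.edgeFinset,
      (((T₀.edgeFinset.filter (fun f => f ≠ e ∧ ∃ x : Fin n, x ∈ e ∧ x ∈ f)).card : ℝ)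
        ≤ (n : ℝ) / 12)) :
    (0.01 : ℝ) *
        (Nat.card {T : SimpleGraph (Fin n) // F ≤ T ∧ T.Connected ∧ T.IsAcyclic} : ℝ)
      ≤ (Nat.card {T : SimpleGraph (Fin n) // F ≤ T ∧ T.Connected ∧ T.IsAcyclic ∧
          ∀ e ∈ T.edgeSet, e ∈ T₀.edgeSet → e ∈ F.edgeSet} : ℝ) := by
  have : Nonempty (Fin n) := ⟨⟨0, by omega⟩⟩
  set D := T₀.edgeFinset \ F.edgeFinset
  have hdeg : ∀ e ∈ T₀.edgeFinset, ∀ x ∈ e, (T₀.degree x : ℝ) ≤ n / 12 + 1 := fun e he x hx =>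
    (Nat.cast_le.mpr (degree_le_card_filter_adjacent_add_one he hx)).trans
      (by push_cast; linarith [hstar e he])
  have hstep : ∀ P ⊆ D, ∀ e ∈ D, e ∉ P →
      (#(treesAvoiding F P) : ℝ) ≤ (1 + 3 / n) * #(treesAvoiding F (insert e P)) := by
    intro P hP e he _
    induction e using Sym2.ind with | _ u v
    obtain ⟨he₀, heF⟩ := mem_sdiff.mp he
    simpa using card_treesAvoiding_le_mul_card_insert_of_degree_le (hP.trans sdiff_subset)
      (mt mem_edgeFinset.mpr heF) (by
        rw [Fintype.card_fin]
        have : (1000 : ℝ) ≤ n := by exact_mod_cast hn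
        linarith [hdeg _ he₀ u (Sym2.mem_mk_left u v), hdeg _ he₀ v (Sym2.mem_mk_right u v)])
  have hD : #D ≤ n := (card_le_card sdiff_subset).trans
    (by simpa using (Nat.le_succ _).trans hT₀.card_edgeFinset_add_one_le)
  rw [natCard_eq_card_treesAvoiding (F := F) (P := ∅) (by simp [isTree_iff]),
    natCard_eq_card_treesAvoiding (F := F) (P := D) (fun T => by
      simp only [isTree_iff, D, mem_sdiff, mem_edgeFinset, and_assoc]
      grind)]
  have := le_pow_card_mul_of_le_mul_insert (by positivity) D hstep
  nlinarith [one_add_three_div_pow_le hD]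

open scoped Classical in
/-- If `F` is a union of `t ≤ n/100` pairwise vertex-disjoint edges in `K_n` (`n ≥ 1000`)
and `T₀` is a forest no edge of which is adjacent to more than `n/12` other edges of `T₀`,
then the number of spanning trees of `K_n` containing `F` and avoiding every edge of
`T₀ \ F` is at least `0.01` times the number of spanning trees containing `F`. -/
theorem count_trees_avoiding_non_star_like (n t : ℕ) (hn : 1000 ≤ n) (ht : 100 * t ≤ n)
    (F : SimpleGraph (Fin n)) [DecidableRel F.Adj]
    (hFdeg : ∀ v : Fin n, F.degree v ≤ 1) (hFedges : F.edgeFinset.card = t)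
    (T₀ : SimpleGraph (Fin n)) [DecidableRel T₀.Adj] (hT₀ : T₀.IsAcyclic)
    (hstar : ∀ e ∈ T₀.edgeFinset,
      (((T₀.edgeFinset.filter (fun f => f ≠ e ∧ ∃ x : Fin n, x ∈ e ∧ x ∈ f)).card : ℝ)
        ≤ (n : ℝ) / 12)) :
    (0.01 : ℝ) *
        (Nat.card {T : SimpleGraph (Fin n) // F ≤ T ∧ T.Connected ∧ T.IsAcyclic} : ℝ)
      ≤ (Nat.card {T : SimpleGraph (Fin n) // F ≤ T ∧ T.Connected ∧ T.IsAcyclic ∧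
          ∀ e ∈ T.edgeSet, e ∈ T₀.edgeSet → e ∈ F.edgeSet} : ℝ) :=
  count_trees_avoiding_non_star_like_general n hn F T₀ hT₀ hstar
end
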